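/- arXiv:1010.3409 — 2 statements merged into one kernel-verified Lean document; each statement's English description precedes it below -/
import Mathlib

section
/- A two-dimensional complex Finsler metric L on D is Kähler if and only if U = V and Y = E on D, and it is weakly Kähler if and only if U = V on D. -/
open Complex

noncomputable section

namespace CFinsler

/-- A point of `T'M` in local coordinates: `(z, η) ∈ ℂⁿ × ℂⁿ`. -/
abbrev Pt (n : ℕ) := (Fin n → ℂ) × (Fin n → ℂ)

variable {n : ℕ}

/-- Wirtinger derivative `∂f/∂z^k`. -/
def dz (f : Pt n → ℂ) (k : Fin n) (p : Pt n) : ℂ :=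
  (1 / 2) * (fderiv ℝ f p ((Pi.single k 1 : Fin n → ℂ), 0) -
    Complex.I * fderiv ℝ f p ((Pi.single k Complex.I : Fin n → ℂ), 0))

/-- Wirtinger derivative `∂f/∂z̄^k`. -/
def dzbar (f : Pt n → ℂ) (k : Fin n) (p : Pt n) : ℂ :=
  (1 / 2) * (fderiv ℝ f p ((Pi.single k 1 : Fin n → ℂ), 0) +
    Complex.I * fderiv ℝ f p ((Pi.single k Complex.I : Fin n → ℂ), 0))

/-- Wirtinger derivative `∂f/∂η^k`. -/
def de (f : Pt n → ℂ) (k : Fin n) (p : Pt n) : ℂ :=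
  (1 / 2) * (fderiv ℝ f p (0, (Pi.single k 1 : Fin n → ℂ)) -
    Complex.I * fderiv ℝ f p (0, (Pi.single k Complex.I : Fin n → ℂ)))

/-- Wirtinger derivative `∂f/∂η̄^k`. -/
def debar (f : Pt n → ℂ) (k : Fin n) (p : Pt n) : ℂ :=
  (1 / 2) * (fderiv ℝ f p (0, (Pi.single k 1 : Fin n → ℂ)) +
    Complex.I * fderiv ℝ f p (0, (Pi.single k Complex.I : Fin n → ℂ)))

/-- The fundamental metric tensor `g_{i j̄} := ∂²L/∂η^i ∂η̄^j`. -/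
def gm (L : Pt n → ℂ) (i j : Fin n) : Pt n → ℂ := de (debar L j) i

/-- `L` is an `n`-dimensional complex Finsler metric on `D`. -/
structure IsCFM (n : ℕ) (D : Set (Pt n)) (L : Pt n → ℂ) : Prop where
  openD : IsOpen D
  fiber_ne : ∀ p ∈ D, p.2 ≠ 0
  conic : ∀ p ∈ D, ∀ lam : ℂ, lam ≠ 0 → (p.1, lam • p.2) ∈ D
  smooth : ContDiffOn ℝ (⊤ : ℕ∞) L D
  real_im : ∀ p ∈ D, (L p).im = 0
  pos : ∀ p ∈ D, 0 < (L p).re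
  homog : ∀ p ∈ D, ∀ lam : ℂ, lam ≠ 0 →
    L (p.1, lam • p.2) = ((Complex.normSq lam : ℝ) : ℂ) * L p
  hermitian : ∀ p ∈ D, ∀ i j, (starRingEnd ℂ) (gm L i j p) = gm L j i p
  posdef : ∀ p ∈ D, ∀ v : Fin n → ℂ, v ≠ 0 →
    0 < (∑ i, ∑ j, gm L i j p * v i * (starRingEnd ℂ) (v j)).re

variable (L : Pt n → ℂ)

/-- The metric tensor as a matrix at a point. -/
def gmat (p : Pt n) : Matrix (Fin n) (Fin n) ℂ := fun i j => gm L i j p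

/-- The inverse metric tensor `g^{l̄ i}`. -/
def gi (l i : Fin n) (p : Pt n) : ℂ := (gmat L p)⁻¹ l i

/-- The Chern–Finsler nonlinear connection coefficients
`N^i_k := g^{m̄ i} (∂g_{l m̄}/∂z^k) η^l`. -/
def Nc (i k : Fin n) (p : Pt n) : ℂ :=
  ∑ m, ∑ l, gi L m i p * dz (gm L l m) k p * p.2 l

/-- The horizontal derivation `δ_k := ∂/∂z^k − N^j_k ∂/∂η^j`. -/
def del (f : Pt n → ℂ) (k : Fin n) (p : Pt n) : ℂ :=
  dz f k p - ∑ j, Nc L j k p * de f j p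

/-- The conjugate horizontal derivation `δ_k̄ := ∂/∂z̄^k − N̄^j_k ∂/∂η̄^j`. -/
def delbar (f : Pt n → ℂ) (k : Fin n) (p : Pt n) : ℂ :=
  dzbar f k p - ∑ j, (starRingEnd ℂ) (Nc L j k p) * debar f j p

/-- The horizontal Chern–Finsler connection coefficients `L^i_{jk} := g^{l̄ i} δ_k(g_{j l̄})`. -/
def Lc (i j k : Fin n) (p : Pt n) : ℂ := ∑ l, gi L l i p * del L (gm L j l) k p

/-- The vertical Chern–Finsler connection coefficients `C^i_{jk} := g^{l̄ i} ∂g_{j l̄}/∂η^k`. -/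
def Cc (i j k : Fin n) (p : Pt n) : ℂ := ∑ l, gi L l i p * de (gm L j l) k p

/-- The spray coefficients `G^i := ½ N^i_j η^j`. -/
def Gs (i : Fin n) (p : Pt n) : ℂ := (1 / 2) * ∑ j, Nc L i j p * p.2 j

/-- The canonical horizontal derivation `δ̊_k := ∂/∂z^k − (∂G^j/∂η^k) ∂/∂η^j`. -/
def delc (f : Pt n → ℂ) (k : Fin n) (p : Pt n) : ℂ :=
  dz f k p - ∑ j, de (Gs L j) k p * de f j p

/-- `F := √L`. -/
def Fh (p : Pt n) : ℂ := (Real.sqrt ((L p).re) : ℂ)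

/-- `l^i := η^i / F`. -/
def lup (i : Fin n) (p : Pt n) : ℂ := p.2 i / Fh L p

/-- `l_i := g_{i j̄} η̄^j / F`. -/
def llow (i : Fin n) (p : Pt n) : ℂ :=
  (∑ j, gm L i j p * (starRingEnd ℂ) (p.2 j)) / Fh L p

/-- `√g` where `g := det(g_{i j̄})`. -/
def sg (p : Pt n) : ℂ := (Real.sqrt ((gmat L p).det.re) : ℂ)

/-- The metric is Kähler. -/
def IsKahler (D : Set (Pt n)) : Prop := ∀ p ∈ D, ∀ i j k, Lc L i j k p = Lc L i k j p

/-- The metric is weakly Kähler. -/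
def IsWeaklyKahler (D : Set (Pt n)) : Prop :=
  ∀ p ∈ D, ∀ k, (∑ i, ∑ j, ∑ l, gm L i l p * (Lc L i j k p - Lc L i k j p) *
    p.2 j * (starRingEnd ℂ) (p.2 l)) = 0

/-- The metric is purely Hermitian: `g_{i j̄}` does not depend on the fibre variable. -/
def IsPurelyHermitian (D : Set (Pt n)) : Prop :=
  ∀ p ∈ D, ∀ i j k, de (gm L i j) k p = 0 ∧ debar (gm L i j) k p = 0

/-- The metric is a complex Berwald metric: Kähler with `L^i_{jk}` independent of the
fibre variable. -/
def IsBerwald (D : Set (Pt n)) : Prop :=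
  IsKahler L D ∧ ∀ p ∈ D, ∀ i j k l, de (Lc L i j k) l p = 0 ∧ debar (Lc L i j k) l p = 0

/-- The metric is a complex Landsberg metric: the Berwald and Rund connections coincide. -/
def IsLandsberg (D : Set (Pt n)) : Prop :=
  ∀ p ∈ D, ∀ i j k, de (de (Gs L i) k) j p =
    (1 / 2) * ∑ l, gi L l i p * (delc L (gm L j l) k p + delc L (gm L k l) j p)

/-- `m^i` of the local complex Berwald frame: `m¹ = −l₂/√g`, `m² = l₁/√g`. -/
def mup (L : Pt 2 → ℂ) (i : Fin 2) (p : Pt 2) : ℂ :=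
  if i = 0 then -(llow L 1 p) / sg L p else llow L 0 p / sg L p

/-- `m_i := g_{i j̄} m̄^j`. -/
def mlow (L : Pt 2 → ℂ) (i : Fin 2) (p : Pt 2) : ℂ :=
  ∑ j, gm L i j p * (starRingEnd ℂ) (mup L j p)

/-- `A := m^j m^k l_h C^h_{kj}`. -/
def sA (L : Pt 2 → ℂ) (p : Pt 2) : ℂ :=
  ∑ j, ∑ k, ∑ h, mup L j p * mup L k p * llow L h p * Cc L h k j p

/-- `B := m_h m^k m^j C^h_{jk}`. -/
def sB (L : Pt 2 → ℂ) (p : Pt 2) : ℂ :=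
  ∑ j, ∑ k, ∑ h, mlow L h p * mup L k p * mup L j p * Cc L h j k p

/-- `J := l^j l^k l_i L^i_{jk}`. -/
def sJ (L : Pt 2 → ℂ) (p : Pt 2) : ℂ :=
  ∑ j, ∑ k, ∑ i, lup L j p * lup L k p * llow L i p * Lc L i j k p

/-- `U := m^j l^k l_i L^i_{jk}`. -/
def sU (L : Pt 2 → ℂ) (p : Pt 2) : ℂ :=
  ∑ j, ∑ k, ∑ i, mup L j p * lup L k p * llow L i p * Lc L i j k p

/-- `V := l^j m^k l_i L^i_{jk}`. -/
def sV (L : Pt 2 → ℂ) (p : Pt 2) : ℂ :=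
  ∑ j, ∑ k, ∑ i, lup L j p * mup L k p * llow L i p * Lc L i j k p

/-- `X := m^j m^k l_i L^i_{jk}`. -/
def sX (L : Pt 2 → ℂ) (p : Pt 2) : ℂ :=
  ∑ j, ∑ k, ∑ i, mup L j p * mup L k p * llow L i p * Lc L i j k p

/-- `O := l^j l^k m_i L^i_{jk}`. -/
def sO (L : Pt 2 → ℂ) (p : Pt 2) : ℂ :=
  ∑ j, ∑ k, ∑ i, lup L j p * lup L k p * mlow L i p * Lc L i j k p

/-- `Y := m^j l^k m_i L^i_{jk}`. -/
def sY (L : Pt 2 → ℂ) (p : Pt 2) : ℂ :=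
  ∑ j, ∑ k, ∑ i, mup L j p * lup L k p * mlow L i p * Lc L i j k p

/-- `E := l^j m^k m_i L^i_{jk}`. -/
def sE (L : Pt 2 → ℂ) (p : Pt 2) : ℂ :=
  ∑ j, ∑ k, ∑ i, lup L j p * mup L k p * mlow L i p * Lc L i j k p

/-- `H := m^j m^k m_i L^i_{jk}`. -/
def sH (L : Pt 2 → ℂ) (p : Pt 2) : ℂ :=
  ∑ j, ∑ k, ∑ i, mup L j p * mup L k p * mlow L i p * Lc L i j k p

/-- The vertical curvature invariant `I := −(∂B/∂η̄^s) m̄^s − B B̄/2`. -/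
def vI (L : Pt 2 → ℂ) (p : Pt 2) : ℂ :=
  -(∑ s, debar (sB L) s p * (starRingEnd ℂ) (mup L s p)) -
    sB L p * (starRingEnd ℂ) (sB L p) / 2

/-- The `v v̄`-Riemann type tensor `S_{r̄ j h̄ k} := −g_{i r̄} ∂C^i_{jk}/∂η̄^h`. -/
def Sv (L : Pt 2 → ℂ) (r j h k : Fin 2) (p : Pt 2) : ℂ :=
  -∑ i, gm L i r p * debar (Cc L i j k) h p

/-- The `h h̄`-Riemann type tensor
`R_{r̄ j h̄ k} := g_{i r̄} (−δ_h̄(L^i_{jk}) − δ_h̄(N^l_k) C^i_{jl})`. -/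
def Rh (L : Pt 2 → ℂ) (r j h k : Fin 2) (p : Pt 2) : ℂ :=
  ∑ i, gm L i r p *
    (-(delbar L (Lc L i j k) h p) - ∑ l, delbar L (Nc L l k) h p * Cc L i j l p)

/-- The horizontal curvature invariant `K := −(1/F) δ_k̄(J) η̄^k`. -/
def hK (L : Pt 2 → ℂ) (p : Pt 2) : ℂ :=
  -(1 / Fh L p) * ∑ k, delbar L (sJ L) k p * (starRingEnd ℂ) (p.2 k)

/-- The horizontal curvature invariant
`W := −δ_s̄(H) m̄^s − ½ H (V̄+H̄) − B F δ_s̄(E) m̄^s`. -/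
def hW (L : Pt 2 → ℂ) (p : Pt 2) : ℂ :=
  -(∑ s, delbar L (sH L) s p * (starRingEnd ℂ) (mup L s p)) -
    (1 / 2) * sH L p * ((starRingEnd ℂ) (sV L p) + (starRingEnd ℂ) (sH L p)) -
    sB L p * Fh L p * ∑ s, delbar L (sE L) s p * (starRingEnd ℂ) (mup L s p)

/-- The weak symmetry condition `R_{0̄ k 0̄ 0} = R_{0̄ 0 0̄ k}`, i.e.
`R_{r̄ k h̄ s} η̄^r η̄^h η^s = R_{r̄ s h̄ k} η̄^r η^s η̄^h`. -/
def WeakSym (L : Pt 2 → ℂ) (D : Set (Pt 2)) : Prop :=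
  ∀ p ∈ D, ∀ k,
    (∑ r, ∑ h, ∑ s, Rh L r k h s p * (starRingEnd ℂ) (p.2 r) *
      (starRingEnd ℂ) (p.2 h) * p.2 s) =
    ∑ r, ∑ s, ∑ h, Rh L r s h k p * (starRingEnd ℂ) (p.2 r) * p.2 s *
      (starRingEnd ℂ) (p.2 h)



/-! ### Auxiliary material for `statement1` -/

/-- `T^i := L^i_{01} - L^i_{10}`, the torsion component. -/
def Tt (M : Pt 2 → ℂ) (i : Fin 2) (p : Pt 2) : ℂ := Lc M i 0 1 p - Lc M i 1 0 p

/-- `Q := g_{i j̄} η^i η̄^j`. -/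
def Qv (M : Pt 2 → ℂ) (p : Pt 2) : ℂ :=
  ∑ i, ∑ j, gm M i j p * p.2 i * (starRingEnd ℂ) (p.2 j)

/-- `F·S` where `S = l_i T^i`. -/
def Sp (M : Pt 2 → ℂ) (p : Pt 2) : ℂ :=
  (gm M 0 0 p * (starRingEnd ℂ) (p.2 0) + gm M 0 1 p * (starRingEnd ℂ) (p.2 1)) * Tt M 0 p +
  (gm M 1 0 p * (starRingEnd ℂ) (p.2 0) + gm M 1 1 p * (starRingEnd ℂ) (p.2 1)) * Tt M 1 p

/-- `Δ := det g`. -/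
def Dt (M : Pt 2 → ℂ) (p : Pt 2) : ℂ :=
  gm M 0 0 p * gm M 1 1 p - gm M 0 1 p * gm M 1 0 p

lemma mup_zero (M : Pt 2 → ℂ) (p : Pt 2) : mup M 0 p = -(llow M 1 p) / sg M p := rfl

lemma mup_one (M : Pt 2 → ℂ) (p : Pt 2) : mup M 1 p = llow M 0 p / sg M p := rfl

lemma conj_Fh (M : Pt 2 → ℂ) (p : Pt 2) : (starRingEnd ℂ) (Fh M p) = Fh M p :=
  Complex.conj_ofReal _

lemma conj_sg (M : Pt 2 → ℂ) (p : Pt 2) : (starRingEnd ℂ) (sg M p) = sg M p :=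
  Complex.conj_ofReal _

lemma facts {D : Set (Pt 2)} {M : Pt 2 → ℂ} (hM : IsCFM 2 D M) {p : Pt 2} (hp : p ∈ D) :
    Fh M p ≠ 0 ∧ sg M p ≠ 0 ∧ Qv M p ≠ 0 ∧ Dt M p ≠ 0 := by
  have hh := hM.hermitian p hp
  -- F ≠ 0
  have hF : Fh M p ≠ 0 := by
    simp only [Fh, ne_eq, Complex.ofReal_eq_zero]
    exact Real.sqrt_ne_zero'.mpr (hM.pos p hp)
  -- Q real and positive
  have hQre : 0 < (Qv M p).re := hM.posdef p hp p.2 (hM.fiber_ne p hp)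
  have hQ : Qv M p ≠ 0 := by
    intro h; rw [h] at hQre; simp at hQre
  -- g00 real positive
  have hg00re : 0 < (gm M 0 0 p).re := by
    have hne : (![1, 0] : Fin 2 → ℂ) ≠ 0 := by
      intro h; simpa using congrFun h 0
    have := hM.posdef p hp ![1, 0] hne
    simpa [Fin.sum_univ_two] using this
  have hg00c : (starRingEnd ℂ) (gm M 0 0 p) = gm M 0 0 p := hh 0 0
  obtain ⟨a, ha⟩ : ∃ a : ℝ, gm M 0 0 p = (a : ℂ) :=
    ⟨(gm M 0 0 p).re, (Complex.conj_eq_iff_re.mp hg00c).symm⟩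
  have hapos : 0 < a := by rwa [ha, Complex.ofReal_re] at hg00re
  -- Δ real
  have hDc : (starRingEnd ℂ) (Dt M p) = Dt M p := by
    simp only [Dt, map_sub, map_mul, hh]; ring
  obtain ⟨b, hb⟩ : ∃ b : ℝ, Dt M p = (b : ℂ) :=
    ⟨(Dt M p).re, (Complex.conj_eq_iff_re.mp hDc).symm⟩
  -- positive definiteness with second vector
  have hvne : (![-(gm M 1 0 p), gm M 0 0 p] : Fin 2 → ℂ) ≠ 0 := by
    intro h
    have := congrFun h 1
    simp only [Matrix.cons_val_one, Matrix.head_cons, Matrix.cons_val_zero, Pi.zero_apply] at this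
    rw [ha] at this
    exact_mod_cast hapos.ne' (by exact_mod_cast this)
  have hsum := hM.posdef p hp ![-(gm M 1 0 p), gm M 0 0 p] hvne
  have hcalc : (∑ i, ∑ j, gm M i j p * (![-(gm M 1 0 p), gm M 0 0 p]) i *
      (starRingEnd ℂ) ((![-(gm M 1 0 p), gm M 0 0 p]) j)) = gm M 0 0 p * Dt M p := by
    simp only [Fin.sum_univ_two, Matrix.cons_val_zero, Matrix.cons_val_one, Matrix.head_cons,
      map_neg, hh, Dt]
    ring
  rw [hcalc, ha, hb, ← Complex.ofReal_mul] at hsum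
  rw [Complex.ofReal_re] at hsum
  have hbpos : 0 < b := by nlinarith
  have hdetD : (gmat M p).det = Dt M p := by
    rw [Matrix.det_fin_two]; rfl
  have hsg : sg M p ≠ 0 := by
    simp only [sg, ne_eq, Complex.ofReal_eq_zero]
    rw [hdetD, hb, Complex.ofReal_re]
    exact Real.sqrt_ne_zero'.mpr hbpos
  have hD : Dt M p ≠ 0 := by
    rw [hb]; exact_mod_cast hbpos.ne'
  exact ⟨hF, hsg, hQ, hD⟩

set_option maxHeartbeats 2000000 in
lemma key1 (M : Pt 2 → ℂ) (p : Pt 2) :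
    sU M p - sV M p = -(Qv M p) / (Fh M p ^ 3 * sg M p) * Sp M p := by
  simp only [sU, sV, Qv, Sp, Tt, mup_zero, mup_one, lup, llow, Fin.sum_univ_two]
  ring

set_option maxHeartbeats 2000000 in
lemma key2 (M : Pt 2 → ℂ) (p : Pt 2)
    (hh : ∀ i j, (starRingEnd ℂ) (gm M i j p) = gm M j i p) :
    sY M p - sE M p = Qv M p * Dt M p / (Fh M p ^ 3 * sg M p ^ 2) *
      (p.2 1 * Tt M 0 p - p.2 0 * Tt M 1 p) := by
  simp only [sY, sE, Qv, Dt, Tt, mlow, mup_zero, mup_one, lup, llow, Fin.sum_univ_two,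
    map_add, map_mul, map_div₀, map_neg, Complex.conj_conj, conj_Fh, conj_sg, hh]
  ring

lemma keyWK0 (M : Pt 2 → ℂ) (p : Pt 2) :
    (∑ i, ∑ j, ∑ l, gm M i l p * (Lc M i j 0 p - Lc M i 0 j p) * p.2 j *
      (starRingEnd ℂ) (p.2 l)) = -(p.2 1 * Sp M p) := by
  simp only [Fin.sum_univ_two, Sp, Tt]; ring

lemma keyWK1 (M : Pt 2 → ℂ) (p : Pt 2) :
    (∑ i, ∑ j, ∑ l, gm M i l p * (Lc M i j 1 p - Lc M i 1 j p) * p.2 j *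
      (starRingEnd ℂ) (p.2 l)) = p.2 0 * Sp M p := by
  simp only [Fin.sum_univ_two, Sp, Tt]; ring

/-- Kähler iff `U = V` and `Y = E`; weakly Kähler iff `U = V`. -/
theorem statement1 (D : Set (Pt 2)) (L : Pt 2 → ℂ) (hL : IsCFM 2 D L) :
    (IsKahler L D ↔ ∀ p ∈ D, sU L p = sV L p ∧ sY L p = sE L p) ∧
    (IsWeaklyKahler L D ↔ ∀ p ∈ D, sU L p = sV L p) := by
  constructor
  · constructor
    · intro hK p hp
      have hT0 : Tt L 0 p = 0 := sub_eq_zero.mpr (hK p hp 0 0 1)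
      have hT1 : Tt L 1 p = 0 := sub_eq_zero.mpr (hK p hp 1 0 1)
      have hSp : Sp L p = 0 := by simp [Sp, hT0, hT1]
      refine ⟨?_, ?_⟩
      · have h := key1 L p
        rw [hSp, mul_zero] at h
        exact sub_eq_zero.mp h
      · have h := key2 L p (hL.hermitian p hp)
        rw [hT0, hT1] at h
        simp only [mul_zero, sub_zero, sub_self] at h
        exact sub_eq_zero.mp (by rw [h])
    · intro h p hp i j k
      obtain ⟨hU, hY⟩ := h p hp
      obtain ⟨hF, hsg, hQ, hD⟩ := facts hL hp
      have hh := hL.hermitian p hp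
      have hSp : Sp L p = 0 := by
        have k1 := key1 L p
        rw [hU, sub_self] at k1
        have hc : -(Qv L p) / (Fh L p ^ 3 * sg L p) ≠ 0 :=
          div_ne_zero (neg_ne_zero.mpr hQ) (mul_ne_zero (pow_ne_zero _ hF) hsg)
        exact (mul_eq_zero.mp k1.symm).resolve_left hc
      have hcross : p.2 1 * Tt L 0 p - p.2 0 * Tt L 1 p = 0 := by
        have k2 := key2 L p hh
        rw [hY, sub_self] at k2
        have hc : Qv L p * Dt L p / (Fh L p ^ 3 * sg L p ^ 2) ≠ 0 :=
          div_ne_zero (mul_ne_zero hQ hD)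
            (mul_ne_zero (pow_ne_zero _ hF) (pow_ne_zero _ hsg))
        exact (mul_eq_zero.mp k2.symm).resolve_left hc
      have hT : Tt L 0 p = 0 ∧ Tt L 1 p = 0 := by
        by_cases h0 : p.2 0 = 0
        · have h1 : p.2 1 ≠ 0 := by
            intro h1
            exact hL.fiber_ne p hp (funext fun i => by fin_cases i <;> assumption)
          have hT1 : Tt L 1 p = 0 := by
            have hz : Qv L p * Tt L 1 p = 0 := by
              simp only [Qv, Sp, Fin.sum_univ_two] at hSp ⊢
              linear_combination p.2 1 * hSp -
                (gm L 0 0 p * (starRingEnd ℂ) (p.2 0) +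
                  gm L 0 1 p * (starRingEnd ℂ) (p.2 1)) * hcross
            exact (mul_eq_zero.mp hz).resolve_left hQ
          have hT0 : Tt L 0 p = 0 := by
            have hz : p.2 1 * Tt L 0 p = 0 := by
              linear_combination hcross + Tt L 1 p * h0
            exact (mul_eq_zero.mp hz).resolve_left h1
          exact ⟨hT0, hT1⟩
        · have hT0 : Tt L 0 p = 0 := by
            have hz : Qv L p * Tt L 0 p = 0 := by
              simp only [Qv, Sp, Fin.sum_univ_two] at hSp ⊢
              linear_combination p.2 0 * hSp +
                (gm L 1 0 p * (starRingEnd ℂ) (p.2 0) +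
                  gm L 1 1 p * (starRingEnd ℂ) (p.2 1)) * hcross
            exact (mul_eq_zero.mp hz).resolve_left hQ
          have hT1 : Tt L 1 p = 0 := by
            have hz : p.2 0 * Tt L 1 p = 0 := by
              linear_combination -hcross + p.2 1 * hT0
            exact (mul_eq_zero.mp hz).resolve_left h0
          exact ⟨hT0, hT1⟩
      have e01 : Lc L i 0 1 p = Lc L i 1 0 p := by
        fin_cases i
        · exact sub_eq_zero.mp hT.1
        · exact sub_eq_zero.mp hT.2
      fin_cases j <;> fin_cases k
      · rfl
      · exact e01
      · exact e01.symm
      · rfl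
  · constructor
    · intro hW p hp
      obtain ⟨hF, hsg, hQ, hD⟩ := facts hL hp
      have h0 := hW p hp 0
      have h1 := hW p hp 1
      rw [keyWK0] at h0
      rw [keyWK1] at h1
      have hSp : Sp L p = 0 := by
        by_cases hz : p.2 0 = 0
        · have hη1 : p.2 1 ≠ 0 := by
            intro h1'
            exact hL.fiber_ne p hp (funext fun i => by fin_cases i <;> assumption)
          exact (mul_eq_zero.mp (neg_eq_zero.mp h0)).resolve_left hη1
        · exact (mul_eq_zero.mp h1).resolve_left hz
      have h := key1 L p
      rw [hSp, mul_zero] at h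
      exact sub_eq_zero.mp h
    · intro h p hp k
      obtain ⟨hF, hsg, hQ, hD⟩ := facts hL hp
      have hU := h p hp
      have hSp : Sp L p = 0 := by
        have k1 := key1 L p
        rw [hU, sub_self] at k1
        have hc : -(Qv L p) / (Fh L p ^ 3 * sg L p) ≠ 0 :=
          div_ne_zero (neg_ne_zero.mpr hQ) (mul_ne_zero (pow_ne_zero _ hF) hsg)
        exact (mul_eq_zero.mp k1.symm).resolve_left hc
      fin_cases k
      · exact (keyWK0 L p).trans (by rw [hSp]; ring)
      · exact (keyWK1 L p).trans (by rw [hSp]; ring)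

end CFinsler
end
end

section
/- If a two-dimensional complex Finsler metric on D is Kähler, then its spray coefficients are holomorphic in the fibre variable: ∂G^i/∂η̄^h = 0 on D for all i,h. -/
open Complex

noncomputable section

namespace CFinsler

variable {n : ℕ}

variable (L : Pt n → ℂ)

/-- generic Wirtinger-type derivative -/
def wd (u w : Pt n) (s : ℂ) (f : Pt n → ℂ) (p : Pt n) : ℂ :=
  (1/2) * (fderiv ℝ f p u + s * fderiv ℝ f p w)

lemma de_eq_wd (f : Pt n → ℂ) (k : Fin n) (p : Pt n) :
    de f k p = CFinsler.wd (0, Pi.single k 1) (0, Pi.single k I) (-I) f p := by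
  simp [de, wd]; ring

lemma debar_eq_wd (f : Pt n → ℂ) (k : Fin n) (p : Pt n) :
    debar f k p = CFinsler.wd (0, Pi.single k 1) (0, Pi.single k I) I f p := by
  simp [debar, wd]

lemma dz_eq_wd (f : Pt n → ℂ) (k : Fin n) (p : Pt n) :
    dz f k p = CFinsler.wd (Pi.single k 1, 0) (Pi.single k I, 0) (-I) f p := by
  simp [dz, wd]; ring

variable {u w : Pt n} {s : ℂ} {f g : Pt n → ℂ} {p : Pt n}

lemma wd_congr (h : f =ᶠ[nhds p] g) : wd u w s f p = wd u w s g p := by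
  rw [wd, wd, h.fderiv_eq]

lemma wd_const (c : ℂ) : wd u w s (fun _ => c) p = 0 := by simp [wd]

lemma wd_add (hf : DifferentiableAt ℝ f p) (hg : DifferentiableAt ℝ g p) :
    wd u w s (fun q => f q + g q) p = wd u w s f p + wd u w s g p := by
  simp only [wd, fderiv_fun_add hf hg, ContinuousLinearMap.add_apply]; ring

lemma wd_mul (hf : DifferentiableAt ℝ f p) (hg : DifferentiableAt ℝ g p) :
    wd u w s (fun q => f q * g q) p = wd u w s f p * g p + f p * wd u w s g p := by
  simp only [wd, fderiv_fun_mul hf hg, ContinuousLinearMap.add_apply,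
    ContinuousLinearMap.smul_apply, smul_eq_mul]; ring

lemma wd_const_mul (c : ℂ) (hf : DifferentiableAt ℝ f p) :
    wd u w s (fun q => c * f q) p = c * wd u w s f p := by
  simp only [wd, fderiv_const_mul hf, ContinuousLinearMap.smul_apply, smul_eq_mul]; ring

lemma wd_neg (hf : DifferentiableAt ℝ f p) :
    wd u w s (fun q => - f q) p = - wd u w s f p := by
  have := wd_const_mul (u := u) (w := w) (s := s) (-1) hf
  simpa using this

lemma wd_sub (hf : DifferentiableAt ℝ f p) (hg : DifferentiableAt ℝ g p) :
    wd u w s (fun q => f q - g q) p = wd u w s f p - wd u w s g p := by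
  simp only [sub_eq_add_neg]
  rw [wd_add hf hg.fun_neg]
  · rw [wd_neg hg]
  
lemma wd_sum {ι : Type*} [DecidableEq ι] (t : Finset ι) (F : ι → Pt n → ℂ)
    (hF : ∀ i ∈ t, DifferentiableAt ℝ (F i) p) :
    wd u w s (fun q => ∑ i ∈ t, F i q) p = ∑ i ∈ t, wd u w s (F i) p := by
  induction t using Finset.induction_on with
  | empty => simp [wd_const]
  | insert a t' hx ih =>
    have h1 : DifferentiableAt ℝ (F a) p := hF a (Finset.mem_insert_self a t')
    have h2 : DifferentiableAt ℝ (fun q => ∑ i ∈ t', F i q) p := by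
      apply DifferentiableAt.fun_sum; intro i hi; exact hF i (Finset.mem_insert_of_mem hi)
    have e1 : (fun q => ∑ i ∈ insert a t', F i q) = fun q => F a q + ∑ i ∈ t', F i q := by
      funext q; rw [Finset.sum_insert hx]
    rw [e1, Finset.sum_insert hx, wd_add h1 h2,
      ih (fun i hi => hF i (Finset.mem_insert_of_mem hi))]

lemma wd_conj (hf : DifferentiableAt ℝ f p) :
    wd u w s (fun q => (starRingEnd ℂ) (f q)) p
      = (starRingEnd ℂ) (wd u w (starRingEnd ℂ s) f p) := by
  have hc : ∀ x, HasFDerivAt (fun q => (starRingEnd ℂ) (f q))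
      ((Complex.conjCLE.toContinuousLinearMap).comp (fderiv ℝ f x)) x → True := fun _ _ => trivial
  have h : fderiv ℝ (fun q => (starRingEnd ℂ) (f q)) p
      = (Complex.conjCLE.toContinuousLinearMap).comp (fderiv ℝ f p) := by
    have := (Complex.conjCLE.toContinuousLinearMap.hasFDerivAt (x := f p)).comp p hf.hasFDerivAt
    exact this.fderiv
  simp only [wd, h, ContinuousLinearMap.coe_comp', Function.comp_apply,
    ContinuousLinearEquiv.coe_coe]
  simp only [Complex.conjCLE_apply, map_mul, map_add]
  have h2 : (starRingEnd ℂ) (1/2 : ℂ) = 1/2 := by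
    rw [map_div₀, map_one, map_ofNat]
  rw [h2, RingHomCompTriple.comp_apply]
  ring_nf
  simp [Complex.conjCLE_apply]
  ring

lemma wd_clm (e : Pt n →L[ℝ] ℂ) : wd u w s (⇑e) p = (1/2) * (e u + s * e w) := by
  simp [wd, e.fderiv]

/-- the fibre coordinate function -/
lemma wd_eta (j : Fin n) : wd u w s (fun q => q.2 j) p = (1/2) * (u.2 j + s * w.2 j) := by
  have : (fun q : Pt n => q.2 j)
      = ⇑((ContinuousLinearMap.proj j).comp (ContinuousLinearMap.snd ℝ (Fin n → ℂ) (Fin n → ℂ))) := rfl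
  rw [this, wd_clm]; rfl

lemma de_eta (j k : Fin n) : de (fun q => q.2 j) k p = if j = k then 1 else 0 := by
  rw [de_eq_wd, wd_eta]
  by_cases h : j = k <;> simp [h, Pi.single_apply] <;> ring

lemma debar_eta (j k : Fin n) : debar (fun q => q.2 j) k p = 0 := by
  rw [debar_eq_wd, wd_eta]
  by_cases h : j = k <;> simp [h, Pi.single_apply] <;> ring

lemma dz_eta (j k : Fin n) : dz (fun q => q.2 j) k p = 0 := by
  rw [dz_eq_wd, wd_eta]; simp

lemma diffAt_eta (j : Fin n) : DifferentiableAt ℝ (fun q : Pt n => q.2 j) p := by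
  have : (fun q : Pt n => q.2 j)
      = ⇑((ContinuousLinearMap.proj j).comp (ContinuousLinearMap.snd ℝ (Fin n → ℂ) (Fin n → ℂ))) := rfl
  rw [this]; exact (ContinuousLinearMap.differentiable _).differentiableAt

lemma contDiffAt_eta (j : Fin n) : ContDiffAt ℝ (⊤:ℕ∞) (fun q : Pt n => q.2 j) p := by
  have : (fun q : Pt n => q.2 j)
      = ⇑((ContinuousLinearMap.proj j).comp (ContinuousLinearMap.snd ℝ (Fin n → ℂ) (Fin n → ℂ))) := rfl
  rw [this]; exact (ContinuousLinearMap.contDiff _).contDiffAt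

lemma debar_conj_eta (j k : Fin n) :
    debar (fun q => (starRingEnd ℂ) (q.2 j)) k p = if j = k then 1 else 0 := by
  rw [debar_eq_wd, wd_conj (diffAt_eta j)]
  rw [wd_eta]
  by_cases h : j = k <;> simp [h, Pi.single_apply, map_ofNat] <;> norm_num

lemma de_conj_eta (j k : Fin n) : de (fun q => (starRingEnd ℂ) (q.2 j)) k p = 0 := by
  rw [de_eq_wd, wd_conj (diffAt_eta j)]
  rw [wd_eta]
  by_cases h : j = k <;> simp [h, Pi.single_apply, map_ofNat] <;> norm_num

lemma dz_conj_eta (j k : Fin n) : dz (fun q => (starRingEnd ℂ) (q.2 j)) k p = 0 := by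
  rw [dz_eq_wd, wd_conj (diffAt_eta j)]
  rw [wd_eta]; simp



lemma two_le_inf : (2 : WithTop ℕ∞) ≤ ((⊤:ℕ∞) : WithTop ℕ∞) := by
  have : ((2:ℕ∞) : WithTop ℕ∞) ≤ ((⊤:ℕ∞) : WithTop ℕ∞) := WithTop.coe_le_coe.mpr le_top
  simpa using this

lemma one_le_inf : (1 : WithTop ℕ∞) ≤ ((⊤:ℕ∞) : WithTop ℕ∞) := by
  have : ((1:ℕ∞) : WithTop ℕ∞) ≤ ((⊤:ℕ∞) : WithTop ℕ∞) := WithTop.coe_le_coe.mpr le_top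
  simpa using this

lemma inf_add_one_le : ((⊤:ℕ∞) : WithTop ℕ∞) + 1 ≤ ((⊤:ℕ∞) : WithTop ℕ∞) := by
  have : ((⊤+1:ℕ∞) : WithTop ℕ∞) ≤ ((⊤:ℕ∞) : WithTop ℕ∞) := WithTop.coe_le_coe.mpr le_top
  simpa using this

lemma wd_fderiv_apply (hf : ContDiffAt ℝ (⊤:ℕ∞) f p) (v : Pt n) :
    fderiv ℝ (wd u w s f) p v
      = (1/2) * ((fderiv ℝ (fderiv ℝ f) p v) u + s * (fderiv ℝ (fderiv ℝ f) p v) w) := by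
  have hF : ContDiffAt ℝ (⊤:ℕ∞) (fderiv ℝ f) p := hf.fderiv_right inf_add_one_le
  have hFd : DifferentiableAt ℝ (fderiv ℝ f) p := hF.differentiableAt (by simp)
  have hu : ∀ y : Pt n, fderiv ℝ (fun q => (fderiv ℝ f q) y) p
      = (fderiv ℝ (fderiv ℝ f) p).flip y := by
    intro y
    rw [fderiv_clm_apply hFd (differentiableAt_const y)]
    simp
  have hu' : ∀ y : Pt n, DifferentiableAt ℝ (fun q => (fderiv ℝ f q) y) p := by
    intro y; exact hFd.clm_apply (differentiableAt_const y)
  have e : wd u w s f = fun q => (1/2 : ℂ) * ((fun q => (fderiv ℝ f q) u) q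
      + s * (fun q => (fderiv ℝ f q) w) q) := by
    funext q; simp [wd]
  rw [e]
  rw [fderiv_const_mul (((hu' u).fun_add ((hu' w).const_mul s)))]
  rw [fderiv_fun_add (hu' u) ((hu' w).const_mul s), fderiv_const_mul (hu' w)]
  simp only [hu u, hu w, ContinuousLinearMap.add_apply, ContinuousLinearMap.smul_apply,
    ContinuousLinearMap.coe_smul', Pi.smul_apply, ContinuousLinearMap.flip_apply, smul_eq_mul]

lemma wd_comm {u' w' : Pt n} {s' : ℂ} (hf : ContDiffAt ℝ (⊤:ℕ∞) f p) :
    wd u w s (wd u' w' s' f) p = wd u' w' s' (wd u w s f) p := by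
  have hs := hf.isSymmSndFDerivAt (by simpa [minSmoothness_of_isRCLikeNormedField] using two_le_inf)
  have h1 := wd_fderiv_apply hf (u := u') (w := w') (s := s') (v := u)
  have h2 := wd_fderiv_apply hf (u := u') (w := w') (s := s') (v := w)
  have h3 := wd_fderiv_apply hf (u := u) (w := w) (s := s) (v := u')
  have h4 := wd_fderiv_apply hf (u := u) (w := w) (s := s) (v := w')
  simp only [wd] at *
  rw [h1, h2, h3, h4, hs u u', hs u w', hs w u', hs w w']
  ring

/-! ### smoothness predicate on an open set -/

def Sm (D : Set (Pt n)) (f : Pt n → ℂ) : Prop := ∀ q ∈ D, ContDiffAt ℝ (⊤:ℕ∞) f q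

variable {D : Set (Pt n)}

lemma Sm.dAt (hf : Sm D f) (hq : p ∈ D) : DifferentiableAt ℝ f p :=
  (hf p hq).differentiableAt (by simp)

lemma Sm.wd (hf : Sm D f) : Sm D (wd u w s f) := by
  intro q hq
  have hF : ContDiffAt ℝ (⊤:ℕ∞) (fderiv ℝ f) q := (hf q hq).fderiv_right inf_add_one_le
  have h1 : ContDiffAt ℝ (⊤:ℕ∞) (fun p => (fderiv ℝ f p) u) q :=
    hF.clm_apply contDiffAt_const
  have h2 : ContDiffAt ℝ (⊤:ℕ∞) (fun p => (fderiv ℝ f p) w) q :=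
    hF.clm_apply contDiffAt_const
  exact contDiffAt_const.mul (h1.add (contDiffAt_const.mul h2))

lemma Sm.wde (hf : Sm D f) (k : Fin n) : Sm D (de f k) := by
  have : de f k = CFinsler.wd (0, Pi.single k 1) (0, Pi.single k I) (-I) f := by
    funext q; exact de_eq_wd f k q
  rw [this]; exact hf.wd

lemma Sm.wdebar (hf : Sm D f) (k : Fin n) : Sm D (debar f k) := by
  have : debar f k = CFinsler.wd (0, Pi.single k 1) (0, Pi.single k I) I f := by
    funext q; exact debar_eq_wd f k q
  rw [this]; exact hf.wd

lemma Sm.wdz (hf : Sm D f) (k : Fin n) : Sm D (dz f k) := by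
  have : dz f k = CFinsler.wd (Pi.single k 1, 0) (Pi.single k I, 0) (-I) f := by
    funext q; exact dz_eq_wd f k q
  rw [this]; exact hf.wd

lemma Sm.mul (hf : Sm D f) (hg : Sm D g) : Sm D (fun q => f q * g q) :=
  fun q hq => (hf q hq).mul (hg q hq)

lemma Sm.add (hf : Sm D f) (hg : Sm D g) : Sm D (fun q => f q + g q) :=
  fun q hq => (hf q hq).add (hg q hq)

lemma Sm.sum {ι : Type*} (t : Finset ι) (F : ι → Pt n → ℂ) (hF : ∀ i ∈ t, Sm D (F i)) :
    Sm D (fun q => ∑ i ∈ t, F i q) := by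
  intro q hq
  exact ContDiffAt.sum (fun i hi => hF i hi q hq)

lemma Sm.const (c : ℂ) : Sm D (fun _ => c) := fun q _ => contDiffAt_const

lemma Sm.eta (j : Fin n) : Sm D (fun q : Pt n => q.2 j) := fun q _ => contDiffAt_eta j

lemma Sm.conj_eta (j : Fin n) : Sm D (fun q : Pt n => (starRingEnd ℂ) (q.2 j)) := by
  intro q hq
  have : (fun q : Pt n => (starRingEnd ℂ) (q.2 j))
      = ⇑Complex.conjCLE ∘ (fun q : Pt n => q.2 j) := rfl
  rw [this]
  exact (Complex.conjCLE.toContinuousLinearMap.contDiff.contDiffAt).comp q (contDiffAt_eta j)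



lemma Sm.neg (hf : Sm D f) : Sm D (fun q => - f q) := fun q hq => (hf q hq).neg
lemma Sm.sub (hf : Sm D f) (hg : Sm D g) : Sm D (fun q => f q - g q) :=
  fun q hq => (hf q hq).sub (hg q hq)
lemma Sm.cmul (c : ℂ) (hf : Sm D f) : Sm D (fun q => c * f q) :=
  fun q hq => contDiffAt_const.mul (hf q hq)

lemma wd_congr_on (hD : IsOpen D) (hq : p ∈ D) (h : ∀ x ∈ D, f x = g x) :
    wd u w s f p = wd u w s g p :=
  wd_congr (Filter.eventuallyEq_of_mem (hD.mem_nhds hq) h)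

lemma de_congr_on (hD : IsOpen D) (hq : p ∈ D) (h : ∀ x ∈ D, f x = g x) (k : Fin n) :
    de f k p = de g k p := by
  rw [de_eq_wd, de_eq_wd]; exact wd_congr_on hD hq h

lemma debar_congr_on (hD : IsOpen D) (hq : p ∈ D) (h : ∀ x ∈ D, f x = g x) (k : Fin n) :
    debar f k p = debar g k p := by
  rw [debar_eq_wd, debar_eq_wd]; exact wd_congr_on hD hq h

lemma dz_congr_on (hD : IsOpen D) (hq : p ∈ D) (h : ∀ x ∈ D, f x = g x) (k : Fin n) :
    dz f k p = dz g k p := by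
  rw [dz_eq_wd, dz_eq_wd]; exact wd_congr_on hD hq h


/-! ### basic consequences -/

section Main

variable {D : Set (Pt 2)} {L : Pt 2 → ℂ}

lemma smL (hL : IsCFM 2 D L) : Sm D L :=
  fun q hq => (hL.smooth.contDiffAt (hL.openD.mem_nhds hq)).of_le (by simp)

lemma sm_gm (hL : IsCFM 2 D L) (i j : Fin 2) : Sm D (gm L i j) :=
  ((smL hL).wdebar j).wde i

lemma det_expand (q : Pt 2) :
    (gmat L q).det = gm L 0 0 q * gm L 1 1 q - gm L 0 1 q * gm L 1 0 q := by
  rw [Matrix.det_fin_two]; rfl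

lemma sm_det (hL : IsCFM 2 D L) : Sm D (fun q => (gmat L q).det) := by
  have : (fun q : Pt 2 => (gmat L q).det)
      = fun q => gm L 0 0 q * gm L 1 1 q - gm L 0 1 q * gm L 1 0 q := by
    funext q; exact det_expand q
  rw [this]
  exact ((sm_gm hL 0 0).mul (sm_gm hL 1 1)).sub ((sm_gm hL 0 1).mul (sm_gm hL 1 0))

lemma det_ne (hL : IsCFM 2 D L) {q : Pt 2} (hq : q ∈ D) : (gmat L q).det ≠ 0 := by
  intro h0
  obtain ⟨v, hv, hvm⟩ := (Matrix.exists_vecMul_eq_zero_iff).mpr h0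
  have hpos := hL.posdef q hq v hv
  have : (∑ i, ∑ j, gm L i j q * v i * (starRingEnd ℂ) (v j)) = 0 := by
    have : ∀ j, (∑ i, gm L i j q * v i) = 0 := by
      intro j
      have := congrFun hvm j
      simpa [Matrix.vecMul, dotProduct, gmat, mul_comm] using this
    calc (∑ i, ∑ j, gm L i j q * v i * (starRingEnd ℂ) (v j))
        = ∑ j, (∑ i, gm L i j q * v i) * (starRingEnd ℂ) (v j) := by
          rw [Finset.sum_comm]
          apply Finset.sum_congr rfl; intro j _
          rw [Finset.sum_mul]
      _ = 0 := by simp [this]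
  rw [this] at hpos; simp at hpos

lemma isUnit_det (hL : IsCFM 2 D L) {q : Pt 2} (hq : q ∈ D) : IsUnit (gmat L q).det :=
  isUnit_iff_ne_zero.mpr (det_ne hL hq)

lemma inv_mul_g (hL : IsCFM 2 D L) {q : Pt 2} (hq : q ∈ D) (m l : Fin 2) :
    (∑ s, gi L m s q * gm L s l q) = if m = l then 1 else 0 := by
  have h := Matrix.nonsing_inv_mul (gmat L q) (isUnit_det hL hq)
  have := congrFun (congrFun h m) l
  rw [Matrix.mul_apply] at this
  simpa [gi, gmat, Matrix.one_apply] using this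

lemma g_mul_inv (hL : IsCFM 2 D L) {q : Pt 2} (hq : q ∈ D) (s i : Fin 2) :
    (∑ l, gm L s l q * gi L l i q) = if s = i then 1 else 0 := by
  have h := Matrix.mul_nonsing_inv (gmat L q) (isUnit_det hL hq)
  have := congrFun (congrFun h s) i
  rw [Matrix.mul_apply] at this
  simpa [gi, gmat, Matrix.one_apply] using this

lemma gi_formula (l i : Fin 2) (q : Pt 2) :
    gi L l i q = ((gmat L q).det)⁻¹ * (gmat L q).adjugate l i := by
  rw [gi, Matrix.inv_def, Matrix.smul_apply, smul_eq_mul, Ring.inverse_eq_inv']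

lemma sm_adj (hL : IsCFM 2 D L) (l i : Fin 2) : Sm D (fun q => (gmat L q).adjugate l i) := by
  fin_cases l <;> fin_cases i <;>
    simp only [Matrix.adjugate_fin_two, Matrix.cons_val', Matrix.cons_val_zero,
      Matrix.cons_val_one, Matrix.head_cons, Matrix.head_fin_const, Matrix.empty_val',
      Matrix.cons_val_fin_one] <;>
  · first
    | exact (fun q hq => ((sm_gm hL 1 1) q hq))
    | exact Sm.neg (sm_gm hL 0 1)
    | exact Sm.neg (sm_gm hL 1 0)
    | exact (fun q hq => ((sm_gm hL 0 0) q hq))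

lemma sm_gi (hL : IsCFM 2 D L) (l i : Fin 2) : Sm D (gi L l i) := by
  intro q hq
  have h1 : ContDiffAt ℝ (⊤:ℕ∞) (fun q => ((gmat L q).det)⁻¹ * (gmat L q).adjugate l i) q :=
    ((sm_det hL q hq).inv (det_ne hL hq)).mul (sm_adj hL l i q hq)
  have : gi L l i = fun q => ((gmat L q).det)⁻¹ * (gmat L q).adjugate l i := by
    funext q'; exact gi_formula l i q'
  rw [this]; exact h1

lemma sm_Nc (hL : IsCFM 2 D L) (i k : Fin 2) : Sm D (Nc L i k) := by
  have : Nc L i k = fun p => ∑ m, ∑ l, gi L m i p * dz (gm L l m) k p * p.2 l := rfl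
  rw [this]
  apply Sm.sum; intro m _
  apply Sm.sum; intro l _
  exact ((sm_gi hL m i).mul ((sm_gm hL l m).wdz k)).mul (Sm.eta l)

lemma sm_Gs (hL : IsCFM 2 D L) (i : Fin 2) : Sm D (Gs L i) := by
  have : Gs L i = fun p => (1/2 : ℂ) * ∑ j, Nc L i j p * p.2 j := rfl
  rw [this]
  exact Sm.cmul _ (Sm.sum _ _ (fun j _ => (sm_Nc hL i j).mul (Sm.eta j)))



/-! ### Euler identities from homogeneity -/

lemma hasDerivAt_scale (q : Pt 2) (c : ℝ → ℂ) (c' : ℂ) (hc : HasDerivAt c c' 0) :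
    HasDerivAt (fun t : ℝ => ((q.1, c t • q.2) : Pt 2)) ((0, c' • q.2)) 0 := by
  exact (hasDerivAt_const (x := (0:ℝ)) (c := q.1)).prodMk (hc.smul_const q.2)

lemma euler_dir1 (hL : IsCFM 2 D L) {q : Pt 2} (hq : q ∈ D) :
    fderiv ℝ L q (0, q.2) = 2 * L q := by
  have hc : HasDerivAt (fun t : ℝ => ((1 + t : ℝ) : ℂ)) 1 0 := by
    have h0 : HasDerivAt (fun t : ℝ => (t : ℂ)) 1 0 := by
      exact Complex.ofRealCLM.hasDerivAt (x := (0:ℝ))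
    simpa using h0.const_add 1
  have hγ := hasDerivAt_scale q _ _ hc
  rw [one_smul] at hγ
  have hγ0 : (fun t : ℝ => ((q.1, ((1 + t : ℝ) : ℂ) • q.2) : Pt 2)) 0 = q := by simp
  have hL1 : HasDerivAt (fun t : ℝ => L (q.1, ((1 + t : ℝ) : ℂ) • q.2))
      (fderiv ℝ L q (0, q.2)) 0 := by
    have hdiff : DifferentiableAt ℝ L q := (smL hL).dAt hq
    have hdiff' : DifferentiableAt ℝ L ((fun t : ℝ => ((q.1, ((1 + t : ℝ) : ℂ) • q.2) : Pt 2)) 0) := by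
      rw [hγ0]; exact hdiff
    have := hdiff'.hasFDerivAt.comp_hasDerivAt 0 hγ
    rw [hγ0] at this; exact this
  have hev : (fun t : ℝ => L (q.1, ((1 + t : ℝ) : ℂ) • q.2))
      =ᶠ[nhds (0:ℝ)] fun t => (((1 + t)^2 : ℝ) : ℂ) * L q := by
    have hmem : Set.Ioi (-1 : ℝ) ∈ nhds (0:ℝ) := (isOpen_Ioi).mem_nhds (by norm_num)
    filter_upwards [hmem] with t ht
    have hne : ((1 + t : ℝ) : ℂ) ≠ 0 := by
      simp only [ne_eq, Complex.ofReal_eq_zero]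
      intro h; rw [Set.mem_Ioi] at ht; linarith
    rw [hL.homog q hq _ hne]
    congr 1
    rw [Complex.normSq_ofReal]
    push_cast; ring
  have hR : HasDerivAt (fun t : ℝ => (((1 + t)^2 : ℝ) : ℂ) * L q) (2 * L q) 0 := by
    have h2 : HasDerivAt (fun t : ℝ => (((1 + t)^2 : ℝ) : ℂ)) 2 0 := by
      have h0 : HasDerivAt (fun t : ℝ => ((t : ℝ) : ℂ)) 1 0 := by
        exact Complex.ofRealCLM.hasDerivAt (x := (0:ℝ))
      have h1 : HasDerivAt (fun t : ℝ => ((1 + t : ℝ) : ℂ)) 1 0 := by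
        simpa using h0.const_add 1
      have := h1.fun_mul h1
      have he : (fun t : ℝ => (((1 + t)^2 : ℝ) : ℂ))
          = fun t : ℝ => ((1 + t : ℝ) : ℂ) * ((1 + t : ℝ) : ℂ) := by
        funext t; push_cast; ring
      rw [he]
      refine this.congr_deriv ?_
      norm_num
    simpa using h2.mul_const (L q)
  have := (hL1.congr_of_eventuallyEq hev.symm)
  have huniq := this.unique hR
  exact huniq

lemma euler_dir2 (hL : IsCFM 2 D L) {q : Pt 2} (hq : q ∈ D) :
    fderiv ℝ L q (0, I • q.2) = 0 := by
  have h0 : HasDerivAt (fun t : ℝ => ((t : ℝ) : ℂ)) 1 0 := by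
    exact Complex.ofRealCLM.hasDerivAt (x := (0:ℝ))
  have hc : HasDerivAt (fun t : ℝ => (1 + (t : ℂ) * I)) I 0 := by
    simpa using (h0.mul_const I).const_add 1
  have hγ := hasDerivAt_scale q _ _ hc
  have hγ0 : (fun t : ℝ => ((q.1, (1 + (t:ℂ) * I) • q.2) : Pt 2)) 0 = q := by simp
  have hL1 : HasDerivAt (fun t : ℝ => L (q.1, (1 + (t:ℂ) * I) • q.2))
      (fderiv ℝ L q (0, I • q.2)) 0 := by
    have hdiff : DifferentiableAt ℝ L q := (smL hL).dAt hq
    have hdiff' : DifferentiableAt ℝ L ((fun t : ℝ => ((q.1, (1 + (t:ℂ) * I) • q.2) : Pt 2)) 0) := by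
      rw [hγ0]; exact hdiff
    have := hdiff'.hasFDerivAt.comp_hasDerivAt 0 hγ
    rw [hγ0] at this; exact this
  have hev : (fun t : ℝ => L (q.1, (1 + (t:ℂ) * I) • q.2))
      =ᶠ[nhds (0:ℝ)] fun t => ((1 + t^2 : ℝ) : ℂ) * L q := by
    apply Filter.Eventually.of_forall
    intro t
    show L (q.1, (1 + (t:ℂ) * I) • q.2) = ((1 + t^2 : ℝ) : ℂ) * L q
    have hne : (1 + (t:ℂ) * I) ≠ 0 := by
      intro h
      have := congrArg Complex.re h
      simp [Complex.add_re, Complex.mul_re] at this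
    rw [hL.homog q hq _ hne]
    congr 1
    have : Complex.normSq (1 + (t:ℂ) * I) = 1 + t^2 := by
      simp [Complex.normSq_apply, Complex.add_re, Complex.add_im, Complex.mul_re,
        Complex.mul_im]
      ring
    rw [this]
  have hR : HasDerivAt (fun t : ℝ => ((1 + t^2 : ℝ) : ℂ) * L q) 0 0 := by
    have h2 : HasDerivAt (fun t : ℝ => ((1 + t^2 : ℝ) : ℂ)) 0 0 := by
      have he : (fun t : ℝ => ((1 + t^2 : ℝ) : ℂ)) = fun t : ℝ => 1 + (t:ℂ) * (t:ℂ) := by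
        funext t; push_cast; ring
      rw [he]
      simpa using ((h0.mul h0).const_add 1)
    simpa using h2.mul_const (L q)
  exact (hL1.congr_of_eventuallyEq hev.symm).unique hR

lemma fderiv_dir_eta {f : Pt 2 → ℂ} {q : Pt 2} (v : Fin 2 → ℂ) :
    fderiv ℝ f q ((0 : Fin 2 → ℂ), v)
      = ∑ j, ((v j).re • fderiv ℝ f q (0, Pi.single j 1)
          + (v j).im • fderiv ℝ f q (0, Pi.single j I)) := by
  have hdecomp : (((0 : Fin 2 → ℂ), v) : Pt 2)
      = ∑ j : Fin 2, ((v j).re • (((0 : Fin 2 → ℂ), (Pi.single j 1 : Fin 2 → ℂ)) : Pt 2)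
          + (v j).im • (((0 : Fin 2 → ℂ), (Pi.single j I : Fin 2 → ℂ)) : Pt 2)) := by
    rw [Fin.sum_univ_two]
    refine Prod.ext (by simp) ?_
    simp only [Prod.smul_snd, Prod.snd_add, Prod.smul_snd]
    funext x
    fin_cases x <;>
      simp [Pi.single_apply, Complex.real_smul] <;>
      rw [mul_comm, mul_comm ((v _).im : ℂ)] <;>
      exact (Complex.re_add_im _).symm
  rw [hdecomp]
  rw [map_sum]
  congr 1; funext j
  rw [map_add, map_smul, map_smul]

lemma euler_A (hL : IsCFM 2 D L) {q : Pt 2} (hq : q ∈ D) :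
    ∑ j, ((q.2 j).re • fderiv ℝ L q (0, Pi.single j 1)
        + (q.2 j).im • fderiv ℝ L q (0, Pi.single j I)) = 2 * L q := by
  rw [← fderiv_dir_eta q.2]
  exact euler_dir1 hL hq

lemma euler_B (hL : IsCFM 2 D L) {q : Pt 2} (hq : q ∈ D) :
    ∑ j, ((-(q.2 j).im) • fderiv ℝ L q (0, Pi.single j 1)
        + (q.2 j).re • fderiv ℝ L q (0, Pi.single j I)) = 0 := by
  have h := euler_dir2 hL hq
  rw [fderiv_dir_eta (I • q.2)] at h
  rw [← h]
  congr 1; funext j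
  have hre : ((I • q.2) j).re = -(q.2 j).im := by simp [Complex.mul_re]
  have him : ((I • q.2) j).im = (q.2 j).re := by simp [Complex.mul_im]
  rw [hre, him]

/-- Euler identity: `η^j ∂L/∂η^j = L`. -/
lemma E0 (hL : IsCFM 2 D L) {q : Pt 2} (hq : q ∈ D) :
    ∑ j, q.2 j * de L j q = L q := by
  have hA := euler_A hL hq
  have hB := euler_B hL hq
  simp only [Fin.sum_univ_two] at hA hB ⊢
  simp only [de, Complex.real_smul] at hA hB ⊢
  set A0 := fderiv ℝ L q (0, Pi.single (0:Fin 2) 1) with hA0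
  set B0 := fderiv ℝ L q (0, Pi.single (0:Fin 2) I) with hB0
  set A1 := fderiv ℝ L q (0, Pi.single (1:Fin 2) 1) with hA1
  set B1 := fderiv ℝ L q (0, Pi.single (1:Fin 2) I) with hB1
  have h0 : q.2 0 = ((q.2 0).re : ℂ) + ((q.2 0).im : ℂ) * I := (Complex.re_add_im _).symm
  have h1 : q.2 1 = ((q.2 1).re : ℂ) + ((q.2 1).im : ℂ) * I := (Complex.re_add_im _).symm
  rw [h0, h1]
  push_cast at hA hB ⊢
  linear_combination (1/2) * hA - (I/2) * hB +
    ((-(1:ℂ)/2) * (((q.2 0).im : ℂ) * B0 + ((q.2 1).im : ℂ) * B1)) * Complex.I_sq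

/-- Conjugate Euler identity: `η̄^j ∂L/∂η̄^j = L`. -/
lemma E0' (hL : IsCFM 2 D L) {q : Pt 2} (hq : q ∈ D) :
    ∑ j, (starRingEnd ℂ) (q.2 j) * debar L j q = L q := by
  have hA := euler_A hL hq
  have hB := euler_B hL hq
  simp only [Fin.sum_univ_two] at hA hB ⊢
  simp only [debar, Complex.real_smul] at hA hB ⊢
  set A0 := fderiv ℝ L q (0, Pi.single (0:Fin 2) 1) with hA0
  set B0 := fderiv ℝ L q (0, Pi.single (0:Fin 2) I) with hB0
  set A1 := fderiv ℝ L q (0, Pi.single (1:Fin 2) 1) with hA1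
  set B1 := fderiv ℝ L q (0, Pi.single (1:Fin 2) I) with hB1
  have h0 : (starRingEnd ℂ) (q.2 0) = ((q.2 0).re : ℂ) - ((q.2 0).im : ℂ) * I := by
    rw [← Complex.re_add_im (q.2 0)]; rw [map_add, map_mul]
    simp [Complex.conj_ofReal]
    ring
  have h1 : (starRingEnd ℂ) (q.2 1) = ((q.2 1).re : ℂ) - ((q.2 1).im : ℂ) * I := by
    rw [← Complex.re_add_im (q.2 1)]; rw [map_add, map_mul]
    simp [Complex.conj_ofReal]
    ring
  rw [h0, h1]
  push_cast at hA hB ⊢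
  linear_combination (1/2) * hA + (I/2) * hB +
    ((-(1:ℂ)/2) * (((q.2 0).im : ℂ) * B0 + ((q.2 1).im : ℂ) * B1)) * Complex.I_sq



/-! ### wrappers for the three Wirtinger operators -/

section Wrap
variable {f g : Pt 2 → ℂ} {p : Pt 2} {k l s h j : Fin 2}

lemma de_mul (hf : DifferentiableAt ℝ f p) (hg : DifferentiableAt ℝ g p) :
    de (fun q => f q * g q) k p = de f k p * g p + f p * de g k p := by
  rw [de_eq_wd, de_eq_wd, de_eq_wd]; exact wd_mul hf hg

lemma debar_mul (hf : DifferentiableAt ℝ f p) (hg : DifferentiableAt ℝ g p) :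
    debar (fun q => f q * g q) k p = debar f k p * g p + f p * debar g k p := by
  rw [debar_eq_wd, debar_eq_wd, debar_eq_wd]; exact wd_mul hf hg

lemma dz_mul (hf : DifferentiableAt ℝ f p) (hg : DifferentiableAt ℝ g p) :
    dz (fun q => f q * g q) k p = dz f k p * g p + f p * dz g k p := by
  rw [dz_eq_wd, dz_eq_wd, dz_eq_wd]; exact wd_mul hf hg

lemma de_sum {F : Fin 2 → Pt 2 → ℂ} (hF : ∀ i, DifferentiableAt ℝ (F i) p) :
    de (fun q => ∑ i, F i q) k p = ∑ i, de (F i) k p := by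
  rw [de_eq_wd]
  rw [wd_sum Finset.univ F (fun i _ => hF i)]
  exact Finset.sum_congr rfl (fun i _ => (de_eq_wd (F i) k p).symm)

lemma debar_sum {F : Fin 2 → Pt 2 → ℂ} (hF : ∀ i, DifferentiableAt ℝ (F i) p) :
    debar (fun q => ∑ i, F i q) k p = ∑ i, debar (F i) k p := by
  rw [debar_eq_wd]
  rw [wd_sum Finset.univ F (fun i _ => hF i)]
  exact Finset.sum_congr rfl (fun i _ => (debar_eq_wd (F i) k p).symm)

lemma dz_sum {F : Fin 2 → Pt 2 → ℂ} (hF : ∀ i, DifferentiableAt ℝ (F i) p) :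
    dz (fun q => ∑ i, F i q) k p = ∑ i, dz (F i) k p := by
  rw [dz_eq_wd]
  rw [wd_sum Finset.univ F (fun i _ => hF i)]
  exact Finset.sum_congr rfl (fun i _ => (dz_eq_wd (F i) k p).symm)

lemma de_cmul (c : ℂ) (hf : DifferentiableAt ℝ f p) :
    de (fun q => c * f q) k p = c * de f k p := by
  rw [de_eq_wd, de_eq_wd]; exact wd_const_mul c hf

lemma debar_cmul (c : ℂ) (hf : DifferentiableAt ℝ f p) :
    debar (fun q => c * f q) k p = c * debar f k p := by
  rw [debar_eq_wd, debar_eq_wd]; exact wd_const_mul c hf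

lemma de_de_comm (hf : ContDiffAt ℝ (⊤:ℕ∞) f p) :
    de (de f s) k p = de (de f k) s p := by
  rw [show de f s = CFinsler.wd (0, Pi.single s 1) (0, Pi.single s I) (-I) f from
    funext (de_eq_wd f s), de_eq_wd, wd_comm hf,
    show CFinsler.wd (0, Pi.single k 1) (0, Pi.single k I) (-I) f = de f k from
    (funext (de_eq_wd f k)).symm]
  exact (de_eq_wd _ s p).symm

lemma de_debar_comm (hf : ContDiffAt ℝ (⊤:ℕ∞) f p) :
    de (debar f l) s p = debar (de f s) l p := by
  rw [show debar f l = CFinsler.wd (0, Pi.single l 1) (0, Pi.single l I) I f from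
    funext (debar_eq_wd f l), de_eq_wd, wd_comm hf,
    show CFinsler.wd (0, Pi.single s 1) (0, Pi.single s I) (-I) f = de f s from
    (funext (de_eq_wd f s)).symm]
  exact (debar_eq_wd _ l p).symm

lemma debar_debar_comm (hf : ContDiffAt ℝ (⊤:ℕ∞) f p) :
    debar (debar f l) h p = debar (debar f h) l p := by
  rw [show debar f l = CFinsler.wd (0, Pi.single l 1) (0, Pi.single l I) I f from
    funext (debar_eq_wd f l), debar_eq_wd, wd_comm hf,
    show CFinsler.wd (0, Pi.single h 1) (0, Pi.single h I) I f = debar f h from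
    (funext (debar_eq_wd f h)).symm]
  exact (debar_eq_wd _ l p).symm

lemma debar_dz_comm (hf : ContDiffAt ℝ (⊤:ℕ∞) f p) :
    debar (dz f k) h p = dz (debar f h) k p := by
  rw [show dz f k = CFinsler.wd (Pi.single k 1, 0) (Pi.single k I, 0) (-I) f from
    funext (dz_eq_wd f k), debar_eq_wd, wd_comm hf,
    show CFinsler.wd (0, Pi.single h 1) (0, Pi.single h I) I f = debar f h from
    (funext (debar_eq_wd f h)).symm]
  exact (dz_eq_wd _ k p).symm

lemma de_dz_comm (hf : ContDiffAt ℝ (⊤:ℕ∞) f p) :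
    de (dz f j) k p = dz (de f k) j p := by
  rw [show dz f j = CFinsler.wd (Pi.single j 1, 0) (Pi.single j I, 0) (-I) f from
    funext (dz_eq_wd f j), de_eq_wd, wd_comm hf,
    show CFinsler.wd (0, Pi.single k 1) (0, Pi.single k I) (-I) f = de f k from
    (funext (de_eq_wd f k)).symm]
  exact (dz_eq_wd _ j p).symm

lemma de_conj (hf : DifferentiableAt ℝ f p) (k : Fin 2) :
    de (fun q => (starRingEnd ℂ) (f q)) k p = (starRingEnd ℂ) (debar f k p) := by
  rw [de_eq_wd, wd_conj hf, debar_eq_wd]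
  norm_num

lemma debar_conj (hf : DifferentiableAt ℝ f p) (k : Fin 2) :
    debar (fun q => (starRingEnd ℂ) (f q)) k p = (starRingEnd ℂ) (de f k p) := by
  rw [debar_eq_wd, wd_conj hf, de_eq_wd]
  norm_num

lemma de_zero_on {D : Set (Pt 2)} (hD : IsOpen D) (hq : p ∈ D)
    (h : ∀ x ∈ D, f x = 0) (k : Fin 2) : de f k p = 0 := by
  rw [de_congr_on hD hq h k, de_eq_wd, wd_const]

lemma debar_zero_on {D : Set (Pt 2)} (hD : IsOpen D) (hq : p ∈ D)
    (h : ∀ x ∈ D, f x = 0) (k : Fin 2) : debar f k p = 0 := by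
  rw [debar_congr_on hD hq h k, debar_eq_wd, wd_const]

lemma dz_zero_on {D : Set (Pt 2)} (hD : IsOpen D) (hq : p ∈ D)
    (h : ∀ x ∈ D, f x = 0) (k : Fin 2) : dz f k p = 0 := by
  rw [dz_congr_on hD hq h k, dz_eq_wd, wd_const]

end Wrap

section Ident
variable {D : Set (Pt 2)} {L : Pt 2 → ℂ}

/-- `g_{j l̄} η^j = ∂̄_l L`. -/
lemma Ia (hL : IsCFM 2 D L) {q : Pt 2} (hq : q ∈ D) (l : Fin 2) :
    ∑ j, q.2 j * gm L j l q = debar L l q := by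
  have hfun : ∀ x ∈ D, (fun x : Pt 2 => ∑ j, x.2 j * de L j x) x = L x :=
    fun x hx => E0 hL hx
  have h1 : debar (fun x : Pt 2 => ∑ j, x.2 j * de L j x) l q = debar L l q :=
    debar_congr_on hL.openD hq hfun l
  have hdiff : ∀ j : Fin 2, DifferentiableAt ℝ (fun x : Pt 2 => x.2 j * de L j x) q :=
    fun j => (diffAt_eta j).mul (((smL hL).wde j).dAt hq)
  rw [debar_sum hdiff] at h1
  rw [← h1]
  apply Finset.sum_congr rfl
  intro j _
  rw [debar_mul (diffAt_eta j) (((smL hL).wde j).dAt hq), debar_eta]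
  have : debar (de L j) l q = gm L j l q :=
    (de_debar_comm ((smL hL) q hq)).symm
  rw [this]; ring

/-- `g_{s h̄} η̄^h = ∂L/∂η^s`. -/
lemma Ib (hL : IsCFM 2 D L) {q : Pt 2} (hq : q ∈ D) (s : Fin 2) :
    ∑ h, (starRingEnd ℂ) (q.2 h) * gm L s h q = de L s q := by
  have hfun : ∀ x ∈ D, (fun x : Pt 2 => ∑ h, (starRingEnd ℂ) (x.2 h) * debar L h x) x = L x :=
    fun x hx => E0' hL hx
  have h1 : de (fun x : Pt 2 => ∑ h, (starRingEnd ℂ) (x.2 h) * debar L h x) s q = de L s q :=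
    de_congr_on hL.openD hq hfun s
  have hdiff : ∀ h : Fin 2,
      DifferentiableAt ℝ (fun x : Pt 2 => (starRingEnd ℂ) (x.2 h) * debar L h x) q :=
    fun h => ((Sm.conj_eta h).dAt hq).mul (((smL hL).wdebar h).dAt hq)
  rw [de_sum hdiff] at h1
  rw [← h1]
  apply Finset.sum_congr rfl
  intro h _
  rw [de_mul ((Sm.conj_eta h).dAt hq) (((smL hL).wdebar h).dAt hq), de_conj_eta]
  show (starRingEnd ℂ) (q.2 h) * gm L s h q = 0 * debar L h q + (starRingEnd ℂ) (q.2 h) * gm L s h q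
  ring

/-- `N^s_k g_{s l̄} = ∂_k ∂̄_l L`. -/
lemma I2 (hL : IsCFM 2 D L) {q : Pt 2} (hq : q ∈ D) (k l : Fin 2) :
    ∑ s, Nc L s k q * gm L s l q = dz (debar L l) k q := by
  have key : ∑ s, Nc L s k q * gm L s l q = ∑ j, q.2 j * dz (gm L j l) k q := by
    have e0 := inv_mul_g hL hq 0 l
    have e1 := inv_mul_g hL hq 1 l
    simp only [Fin.sum_univ_two] at e0 e1
    simp only [Nc, Fin.sum_univ_two]
    fin_cases l <;> norm_num at e0 e1 ⊢ <;>
    linear_combination (dz (gm L 0 0) k q * q.2 0 + dz (gm L 1 0) k q * q.2 1) * e0 +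
      (dz (gm L 0 1) k q * q.2 0 + dz (gm L 1 1) k q * q.2 1) * e1
  rw [key]
  have hfun : ∀ x ∈ D, (fun x : Pt 2 => ∑ j, x.2 j * gm L j l x) x = debar L l x :=
    fun x hx => Ia hL hx l
  have h1 : dz (fun x : Pt 2 => ∑ j, x.2 j * gm L j l x) k q = dz (debar L l) k q :=
    dz_congr_on hL.openD hq hfun k
  have hdiff : ∀ j : Fin 2, DifferentiableAt ℝ (fun x : Pt 2 => x.2 j * gm L j l x) q :=
    fun j => (diffAt_eta j).mul ((sm_gm hL j l).dAt hq)
  rw [← h1, dz_sum hdiff]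
  apply Finset.sum_congr rfl
  intro j _
  rw [dz_mul (diffAt_eta j) ((sm_gm hL j l).dAt hq), dz_eta]
  ring

/-- `ℓ_s N^s_k = ∂_k L`. -/
lemma I3 (hL : IsCFM 2 D L) {q : Pt 2} (hq : q ∈ D) (k : Fin 2) :
    ∑ s, de L s q * Nc L s k q = dz L k q := by
  have key : ∑ s, de L s q * Nc L s k q
      = ∑ h, (starRingEnd ℂ) (q.2 h) * (∑ s, Nc L s k q * gm L s h q) := by
    have b0 := Ib hL hq 0
    have b1 := Ib hL hq 1
    simp only [Fin.sum_univ_two] at b0 b1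
    simp only [Fin.sum_univ_two]
    linear_combination Nc L 0 k q * b0.symm + Nc L 1 k q * b1.symm
  rw [key]
  have h2 : ∀ h : Fin 2, (∑ s, Nc L s k q * gm L s h q) = dz (debar L h) k q :=
    fun h => I2 hL hq k h
  have key2 : ∑ h, (starRingEnd ℂ) (q.2 h) * (∑ s, Nc L s k q * gm L s h q)
      = ∑ h, (starRingEnd ℂ) (q.2 h) * dz (debar L h) k q := by
    apply Finset.sum_congr rfl; intro h _; rw [h2 h]
  rw [key2]
  have hfun : ∀ x ∈ D,
      (fun x : Pt 2 => ∑ h, (starRingEnd ℂ) (x.2 h) * debar L h x) x = L x :=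
    fun x hx => E0' hL hx
  have h1 : dz (fun x : Pt 2 => ∑ h, (starRingEnd ℂ) (x.2 h) * debar L h x) k q
      = dz L k q := dz_congr_on hL.openD hq hfun k
  have hdiff : ∀ h : Fin 2,
      DifferentiableAt ℝ (fun x : Pt 2 => (starRingEnd ℂ) (x.2 h) * debar L h x) q :=
    fun h => ((Sm.conj_eta h).dAt hq).mul (((smL hL).wdebar h).dAt hq)
  rw [← h1, dz_sum hdiff]
  apply Finset.sum_congr rfl
  intro h _
  rw [dz_mul ((Sm.conj_eta h).dAt hq) (((smL hL).wdebar h).dAt hq), dz_conj_eta]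
  ring

/-- `ℓ_s ∂̄_h N^s_k = 0`. -/
lemma I4 (hL : IsCFM 2 D L) {q : Pt 2} (hq : q ∈ D) (k h : Fin 2) :
    ∑ s, de L s q * debar (Nc L s k) h q = 0 := by
  have hfun : ∀ x ∈ D, (fun x : Pt 2 => ∑ s, de L s x * Nc L s k x) x = dz L k x :=
    fun x hx => I3 hL hx k
  have h1 : debar (fun x : Pt 2 => ∑ s, de L s x * Nc L s k x) h q = debar (dz L k) h q :=
    debar_congr_on hL.openD hq hfun h
  have hdiff : ∀ s : Fin 2, DifferentiableAt ℝ (fun x : Pt 2 => de L s x * Nc L s k x) q :=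
    fun s => (((smL hL).wde s).dAt hq).mul ((sm_Nc hL s k).dAt hq)
  rw [debar_sum hdiff] at h1
  have h2 : ∀ s : Fin 2, debar (fun x => de L s x * Nc L s k x) h q
      = gm L s h q * Nc L s k q + de L s q * debar (Nc L s k) h q := by
    intro s
    rw [debar_mul (((smL hL).wde s).dAt hq) ((sm_Nc hL s k).dAt hq)]
    have : debar (de L s) h q = gm L s h q := (de_debar_comm ((smL hL) q hq)).symm
    rw [this]
  have h3 : debar (dz L k) h q = dz (debar L h) k q := debar_dz_comm ((smL hL) q hq)
  have h4 : ∑ s, Nc L s k q * gm L s h q = dz (debar L h) k q := I2 hL hq k h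
  rw [h3, ← h4] at h1
  simp only [Fin.sum_univ_two] at h1 h4 ⊢
  rw [h2 0, h2 1] at h1
  linear_combination h1

/-- `ℓ_s G^s = ½ η^j ∂_j L` (on `D`). -/
lemma I5A (hL : IsCFM 2 D L) {q : Pt 2} (hq : q ∈ D) :
    ∑ s, de L s q * Gs L s q = (1/2) * ∑ j, q.2 j * dz L j q := by
  have h0 := I3 hL hq 0
  have h1 := I3 hL hq 1
  simp only [Fin.sum_univ_two] at h0 h1
  simp only [Gs, Nc, Fin.sum_univ_two]
  simp only [Nc, Fin.sum_univ_two] at h0 h1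
  linear_combination (q.2 0 / 2) * h0 + (q.2 1 / 2) * h1

/-- `ℓ_s ∂̄_h G^s = 0`. -/
lemma I5 (hL : IsCFM 2 D L) {q : Pt 2} (hq : q ∈ D) (h : Fin 2) :
    ∑ s, de L s q * debar (Gs L s) h q = 0 := by
  have hfun : ∀ x ∈ D, (fun x : Pt 2 => ∑ s, de L s x * Gs L s x) x
      = (fun x : Pt 2 => (1/2) * ∑ j, x.2 j * dz L j x) x :=
    fun x hx => I5A hL hx
  have h1 : debar (fun x : Pt 2 => ∑ s, de L s x * Gs L s x) h q
      = debar (fun x : Pt 2 => (1/2) * ∑ j, x.2 j * dz L j x) h q :=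
    debar_congr_on hL.openD hq hfun h
  have hdiff : ∀ s : Fin 2, DifferentiableAt ℝ (fun x : Pt 2 => de L s x * Gs L s x) q :=
    fun s => (((smL hL).wde s).dAt hq).mul ((sm_Gs hL s).dAt hq)
  rw [debar_sum hdiff] at h1
  have h2 : ∀ s : Fin 2, debar (fun x => de L s x * Gs L s x) h q
      = gm L s h q * Gs L s q + de L s q * debar (Gs L s) h q := by
    intro s
    rw [debar_mul (((smL hL).wde s).dAt hq) ((sm_Gs hL s).dAt hq)]
    have : debar (de L s) h q = gm L s h q := (de_debar_comm ((smL hL) q hq)).symm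
    rw [this]
  have hdiff2 : ∀ j : Fin 2, DifferentiableAt ℝ (fun x : Pt 2 => x.2 j * dz L j x) q :=
    fun j => (diffAt_eta j).mul (((smL hL).wdz j).dAt hq)
  have h3 : debar (fun x : Pt 2 => (1/2) * ∑ j, x.2 j * dz L j x) h q
      = (1/2) * ∑ j, q.2 j * debar (dz L j) h q := by
    rw [debar_cmul _ (by exact DifferentiableAt.fun_sum (fun j _ => hdiff2 j))]
    rw [debar_sum hdiff2]
    congr 1
    apply Finset.sum_congr rfl
    intro j _
    rw [debar_mul (diffAt_eta j) (((smL hL).wdz j).dAt hq), debar_eta]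
    ring
  have h4 : ∀ j : Fin 2, debar (dz L j) h q = dz (debar L h) j q :=
    fun j => debar_dz_comm ((smL hL) q hq)
  have h5 : ∀ j : Fin 2, ∑ s, Nc L s j q * gm L s h q = dz (debar L h) j q :=
    fun j => I2 hL hq j h
  rw [h3] at h1
  simp only [Fin.sum_univ_two] at h1 ⊢
  rw [h2 0, h2 1] at h1
  have h40 := h4 0; have h41 := h4 1
  have h50 := h5 0; have h51 := h5 1
  simp only [Fin.sum_univ_two] at h50 h51
  simp only [Gs, Nc, Fin.sum_univ_two] at h1 ⊢
  simp only [Nc, Fin.sum_univ_two] at h40 h41 h50 h51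
  linear_combination h1 + (q.2 0 / 2) * h40 + (q.2 1 / 2) * h41 -
    (q.2 0 / 2) * h50 - (q.2 1 / 2) * h51

/-- `η^j ∂_k(g_{j l̄}) = ∂_k ∂̄_l L` as a sum identity. -/
lemma sumEtaDzGm (hL : IsCFM 2 D L) {q : Pt 2} (hq : q ∈ D) (k l : Fin 2) :
    ∑ j, q.2 j * dz (gm L j l) k q = dz (debar L l) k q := by
  have hfun : ∀ x ∈ D, (fun x : Pt 2 => ∑ j, x.2 j * gm L j l x) x = debar L l x :=
    fun x hx => Ia hL hx l
  have h1 : dz (fun x : Pt 2 => ∑ j, x.2 j * gm L j l x) k q = dz (debar L l) k q :=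
    dz_congr_on hL.openD hq hfun k
  have hdiff : ∀ j : Fin 2, DifferentiableAt ℝ (fun x : Pt 2 => x.2 j * gm L j l x) q :=
    fun j => (diffAt_eta j).mul ((sm_gm hL j l).dAt hq)
  rw [← h1, dz_sum hdiff]
  apply Finset.sum_congr rfl
  intro j _
  rw [dz_mul (diffAt_eta j) ((sm_gm hL j l).dAt hq), dz_eta]
  ring

/-- `η^j ∂̇_s(g_{j l̄}) = 0`. -/
lemma sumEtaDeGm (hL : IsCFM 2 D L) {q : Pt 2} (hq : q ∈ D) (s l : Fin 2) :
    ∑ j, q.2 j * de (gm L j l) s q = 0 := by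
  have hfun : ∀ x ∈ D, (fun x : Pt 2 => ∑ j, x.2 j * gm L j l x) x = debar L l x :=
    fun x hx => Ia hL hx l
  have h1 : de (fun x : Pt 2 => ∑ j, x.2 j * gm L j l x) s q = de (debar L l) s q :=
    de_congr_on hL.openD hq hfun s
  have hdiff : ∀ j : Fin 2, DifferentiableAt ℝ (fun x : Pt 2 => x.2 j * gm L j l x) q :=
    fun j => (diffAt_eta j).mul ((sm_gm hL j l).dAt hq)
  rw [de_sum hdiff] at h1
  have h2 : ∀ j : Fin 2, de (fun x : Pt 2 => x.2 j * gm L j l x) s q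
      = (if j = s then 1 else 0) * gm L j l q + q.2 j * de (gm L j l) s q := by
    intro j
    rw [de_mul (diffAt_eta j) ((sm_gm hL j l).dAt hq), de_eta]
  have h3 : de (debar L l) s q = gm L s l q := rfl
  simp only [Fin.sum_univ_two] at h1 ⊢
  rw [h2 0, h2 1, h3] at h1
  fin_cases s <;> norm_num at h1 ⊢ <;> linear_combination h1

/-- `η^j ∂̇_k(∂̇_j L) = 0`. -/
lemma I8 (hL : IsCFM 2 D L) {q : Pt 2} (hq : q ∈ D) (k : Fin 2) :
    ∑ j, q.2 j * de (de L j) k q = 0 := by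
  have hfun : ∀ x ∈ D, (fun x : Pt 2 => ∑ j, x.2 j * de L j x) x = L x :=
    fun x hx => E0 hL hx
  have h1 : de (fun x : Pt 2 => ∑ j, x.2 j * de L j x) k q = de L k q :=
    de_congr_on hL.openD hq hfun k
  have hdiff : ∀ j : Fin 2, DifferentiableAt ℝ (fun x : Pt 2 => x.2 j * de L j x) q :=
    fun j => (diffAt_eta j).mul (((smL hL).wde j).dAt hq)
  rw [de_sum hdiff] at h1
  have h2 : ∀ j : Fin 2, de (fun x : Pt 2 => x.2 j * de L j x) k q
      = (if j = k then 1 else 0) * de L j q + q.2 j * de (de L j) k q := by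
    intro j
    rw [de_mul (diffAt_eta j) (((smL hL).wde j).dAt hq), de_eta]
  simp only [Fin.sum_univ_two] at h1 ⊢
  rw [h2 0, h2 1] at h1
  fin_cases k <;> norm_num at h1 ⊢ <;> linear_combination h1

/-- Kähler symmetry of `δ(g)`. -/
lemma K1 (hL : IsCFM 2 D L) (hK : IsKahler L D) {q : Pt 2} (hq : q ∈ D) (j k m : Fin 2) :
    del L (gm L j m) k q = del L (gm L k m) j q := by
  have expand : ∀ j' k' : Fin 2,
      ∑ i, gm L i m q * Lc L i j' k' q = del L (gm L j' m) k' q := by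
    intro j' k'
    have e0 := inv_mul_g hL hq 0 m
    have e1 := inv_mul_g hL hq 1 m
    simp only [Fin.sum_univ_two] at e0 e1
    simp only [Lc, Fin.sum_univ_two]
    fin_cases m <;> norm_num at e0 e1 ⊢ <;>
      linear_combination (del L (gm L j' 0) k' q) * e0 + (del L (gm L j' 1) k' q) * e1
  rw [← expand j k, ← expand k j]
  apply Finset.sum_congr rfl
  intro i _
  rw [hK q hq i j k]

/-- Kähler: `η^j δ_j(g_{k l̄}) = g_{s l̄} N^s_k`. -/
lemma K3 (hL : IsCFM 2 D L) (hK : IsKahler L D) {q : Pt 2} (hq : q ∈ D) (k l : Fin 2) :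
    ∑ j, q.2 j * del L (gm L k l) j q = ∑ s, gm L s l q * Nc L s k q := by
  have hswap : ∀ j : Fin 2, del L (gm L k l) j q = del L (gm L j l) k q :=
    fun j => K1 hL hK hq k j l
  have step1 : ∑ j, q.2 j * del L (gm L k l) j q
      = ∑ j, q.2 j * del L (gm L j l) k q := by
    apply Finset.sum_congr rfl; intro j _; rw [hswap j]
  rw [step1]
  have hdz := sumEtaDzGm hL hq k l
  have hde0 := sumEtaDeGm hL hq 0 l
  have hde1 := sumEtaDeGm hL hq 1 l
  have hI2 := I2 hL hq k l
  simp only [del, Fin.sum_univ_two] at *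
  linear_combination hdz - Nc L 0 k q * hde0 - Nc L 1 k q * hde1 - hI2

/-- Kähler: lowered form of `η^j ∂̇_k N^i_j = N^i_k`. -/
lemma Kd1_low (hL : IsCFM 2 D L) (hK : IsKahler L D) {q : Pt 2} (hq : q ∈ D) (k l : Fin 2) :
    ∑ j, q.2 j * (∑ s, de (Nc L s j) k q * gm L s l q)
      = ∑ s, gm L s l q * Nc L s k q := by
  have ha : ∀ j : Fin 2,
      ∑ s, (de (Nc L s j) k q * gm L s l q + Nc L s j q * de (gm L s l) k q)
        = dz (gm L k l) j q := by
    intro j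
    have hfun : ∀ x ∈ D, (fun x : Pt 2 => ∑ s, Nc L s j x * gm L s l x) x
        = dz (debar L l) j x := fun x hx => I2 hL hx j l
    have h1 : de (fun x : Pt 2 => ∑ s, Nc L s j x * gm L s l x) k q
        = de (dz (debar L l) j) k q := de_congr_on hL.openD hq hfun k
    have hdiff : ∀ s : Fin 2, DifferentiableAt ℝ (fun x : Pt 2 => Nc L s j x * gm L s l x) q :=
      fun s => ((sm_Nc hL s j).dAt hq).mul ((sm_gm hL s l).dAt hq)
    rw [de_sum hdiff] at h1
    have h2 : ∀ s : Fin 2, de (fun x => Nc L s j x * gm L s l x) k q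
        = de (Nc L s j) k q * gm L s l q + Nc L s j q * de (gm L s l) k q :=
      fun s => de_mul ((sm_Nc hL s j).dAt hq) ((sm_gm hL s l).dAt hq)
    have h3 : de (dz (debar L l) j) k q = dz (de (debar L l) k) j q :=
      de_dz_comm (((smL hL).wdebar l) q hq)
    simp only [Fin.sum_univ_two] at h1 ⊢
    rw [h2 0, h2 1, h3] at h1
    exact h1
  have hb : ∀ s : Fin 2, de (gm L s l) k q = de (gm L k l) s q := by
    intro s
    exact de_de_comm (((smL hL).wdebar l) q hq)
  have hc := K3 hL hK hq k l
  have ha0 := ha 0; have ha1 := ha 1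
  have hb0 := hb 0; have hb1 := hb 1
  simp only [del, Fin.sum_univ_two] at *
  linear_combination q.2 0 * ha0 + q.2 1 * ha1 + hc -
    (q.2 0 * Nc L 0 0 q + q.2 1 * Nc L 0 1 q) * hb0 -
    (q.2 0 * Nc L 1 0 q + q.2 1 * Nc L 1 1 q) * hb1

/-- Kähler: `η^j ∂̇_k N^i_j = N^i_k`. -/
lemma Kd1 (hL : IsCFM 2 D L) (hK : IsKahler L D) {q : Pt 2} (hq : q ∈ D) (i k : Fin 2) :
    ∑ j, q.2 j * de (Nc L i j) k q = Nc L i k q := by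
  have st0 := Kd1_low hL hK hq k 0
  have st1 := Kd1_low hL hK hq k 1
  have m0 := g_mul_inv hL hq 0 i
  have m1 := g_mul_inv hL hq 1 i
  simp only [Fin.sum_univ_two] at st0 st1 m0 m1 ⊢
  fin_cases i
  · norm_num at m0 m1 ⊢
    linear_combination gi L 0 0 q * st0 + gi L 1 0 q * st1 -
      (q.2 0 * de (Nc L 0 0) k q + q.2 1 * de (Nc L 0 1) k q - Nc L 0 k q) * m0 -
      (q.2 0 * de (Nc L 1 0) k q + q.2 1 * de (Nc L 1 1) k q - Nc L 1 k q) * m1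
  · norm_num at m0 m1 ⊢
    linear_combination gi L 0 1 q * st0 + gi L 1 1 q * st1 -
      (q.2 0 * de (Nc L 0 0) k q + q.2 1 * de (Nc L 0 1) k q - Nc L 0 k q) * m0 -
      (q.2 0 * de (Nc L 1 0) k q + q.2 1 * de (Nc L 1 1) k q - Nc L 1 k q) * m1

/-- Kähler: `∂̇_k G^i = N^i_k`. -/
lemma K4 (hL : IsCFM 2 D L) (hK : IsKahler L D) {q : Pt 2} (hq : q ∈ D) (i k : Fin 2) :
    de (Gs L i) k q = Nc L i k q := by
  have hGs : Gs L i = fun x : Pt 2 => (1/2 : ℂ) * ∑ j, Nc L i j x * x.2 j := rfl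
  have hdiff : ∀ j : Fin 2, DifferentiableAt ℝ (fun x : Pt 2 => Nc L i j x * x.2 j) q :=
    fun j => ((sm_Nc hL i j).dAt hq).mul (diffAt_eta j)
  rw [hGs, de_cmul _ (DifferentiableAt.fun_sum (fun j _ => hdiff j)), de_sum hdiff]
  have h2 : ∀ j : Fin 2, de (fun x : Pt 2 => Nc L i j x * x.2 j) k q
      = de (Nc L i j) k q * q.2 j + Nc L i j q * (if j = k then 1 else 0) := by
    intro j
    rw [de_mul ((sm_Nc hL i j).dAt hq) (diffAt_eta j), de_eta]
  have hKd := Kd1 hL hK hq i k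
  have hdelta : Nc L i 0 q * (if (0:Fin 2) = k then 1 else 0)
      + Nc L i 1 q * (if (1:Fin 2) = k then 1 else 0) = Nc L i k q := by
    fin_cases k <;> simp
  simp only [Fin.sum_univ_two] at hKd ⊢
  rw [h2 0, h2 1]
  linear_combination (1/2 : ℂ) * hKd + (1/2 : ℂ) * hdelta

/-- Kähler: `∂̇_k(∂̇_s L) ∂̄_h G^s = 0` (the key identity). -/
lemma K5 (hL : IsCFM 2 D L) (hK : IsKahler L D) {q : Pt 2} (hq : q ∈ D) (k h : Fin 2) :
    ∑ s, de (de L s) k q * debar (Gs L s) h q = 0 := by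
  have hzero : de (fun x : Pt 2 => ∑ s, de L s x * debar (Gs L s) h x) k q = 0 :=
    de_zero_on hL.openD hq (fun x hx => I5 hL hx h) k
  have hdiff : ∀ s : Fin 2,
      DifferentiableAt ℝ (fun x : Pt 2 => de L s x * debar (Gs L s) h x) q :=
    fun s => (((smL hL).wde s).dAt hq).mul (((sm_Gs hL s).wdebar h).dAt hq)
  rw [de_sum hdiff] at hzero
  have h2 : ∀ s : Fin 2, de (fun x => de L s x * debar (Gs L s) h x) k q
      = de (de L s) k q * debar (Gs L s) h q + de L s q * de (debar (Gs L s) h) k q :=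
    fun s => de_mul (((smL hL).wde s).dAt hq) (((sm_Gs hL s).wdebar h).dAt hq)
  have h3 : ∀ s : Fin 2, de (debar (Gs L s) h) k q = debar (Nc L s k) h q := by
    intro s
    rw [de_debar_comm ((sm_Gs hL s) q hq)]
    exact debar_congr_on hL.openD hq (fun x hx => K4 hL hK hx s k) h
  have hI4 := I4 hL hq k h
  simp only [Fin.sum_univ_two] at hzero hI4 ⊢
  rw [h2 0, h2 1, h3 0, h3 1] at hzero
  linear_combination hzero - hI4

lemma L_ne_zero (hL : IsCFM 2 D L) {q : Pt 2} (hq : q ∈ D) : L q ≠ 0 := by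
  intro h
  have := hL.pos q hq
  rw [h] at this
  simp at this

/-- Case A: nondegenerate fibre Hessian forces the spray derivative to vanish. -/
lemma mainA (hL : IsCFM 2 D L) (hK : IsKahler L D) {q : Pt 2} (hq : q ∈ D)
    (k : Fin 2) (hker : de (de L 0) k q ≠ 0 ∨ de (de L 1) k q ≠ 0)
    (i h : Fin 2) : debar (Gs L i) h q = 0 := by
  have hK5 := K5 hL hK hq k h
  have hI8 := I8 hL hq k
  have hI5 := I5 hL hq h
  have hE0 := E0 hL hq
  simp only [Fin.sum_univ_two] at hK5 hI8 hI5 hE0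
  set W0 := debar (Gs L 0) h q with hW0
  set W1 := debar (Gs L 1) h q with hW1
  set c0 := de (de L 0) k q with hc0
  set c1 := de (de L 1) k q with hc1
  have hcross : W0 * q.2 1 - W1 * q.2 0 = 0 := by
    rcases hker with hc | hc
    · apply mul_left_cancel₀ hc
      linear_combination q.2 1 * hK5 - W1 * hI8
    · apply mul_left_cancel₀ hc
      linear_combination W0 * hI8 - q.2 0 * hK5
  have h0 : W0 * (q.2 0 * de L 0 q + q.2 1 * de L 1 q) = 0 := by
    linear_combination q.2 0 * hI5 + de L 1 q * hcross
  have h1 : W1 * (q.2 0 * de L 0 q + q.2 1 * de L 1 q) = 0 := by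
    linear_combination q.2 1 * hI5 - de L 0 q * hcross
  have hE0' : q.2 0 * de L 0 q + q.2 1 * de L 1 q = L q := hE0
  rw [hE0'] at h0 h1
  have hLne := L_ne_zero hL hq
  fin_cases i
  · exact (mul_eq_zero.mp h0).resolve_right hLne
  · exact (mul_eq_zero.mp h1).resolve_right hLne

lemma fderiv_L_conj (hL : IsCFM 2 D L) {q : Pt 2} (hq : q ∈ D) (v : Pt 2) :
    (starRingEnd ℂ) (fderiv ℝ L q v) = fderiv ℝ L q v := by
  have hev : L =ᶠ[nhds q] fun x => (((L x).re : ℝ) : ℂ) := by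
    apply Filter.eventuallyEq_of_mem (hL.openD.mem_nhds hq)
    intro x hx
    apply Complex.ext
    · simp
    · simp [hL.real_im x hx]
  have hr : DifferentiableAt ℝ (fun x : Pt 2 => (L x).re) q :=
    (Complex.reCLM.differentiable.differentiableAt).comp q ((smL hL).dAt hq)
  have hcomp : HasFDerivAt (fun x : Pt 2 => (((L x).re : ℝ) : ℂ))
      (Complex.ofRealCLM.comp (fderiv ℝ (fun x : Pt 2 => (L x).re) q)) q :=
    (Complex.ofRealCLM.hasFDerivAt).comp q hr.hasFDerivAt
  have heq : fderiv ℝ L q = Complex.ofRealCLM.comp (fderiv ℝ (fun x : Pt 2 => (L x).re) q) := by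
    rw [hev.fderiv_eq, hcomp.fderiv]
  rw [heq]
  simp [Complex.conj_ofReal]

lemma debar_neg' {f : Pt 2 → ℂ} {p : Pt 2} {k : Fin 2} (hf : DifferentiableAt ℝ f p) :
    debar (fun q => - f q) k p = - debar f k p := by
  rw [debar_eq_wd, debar_eq_wd]; exact wd_neg hf

lemma debar_sub' {f g : Pt 2 → ℂ} {p : Pt 2} {k : Fin 2} (hf : DifferentiableAt ℝ f p)
    (hg : DifferentiableAt ℝ g p) :
    debar (fun q => f q - g q) k p = debar f k p - debar g k p := by
  rw [debar_eq_wd, debar_eq_wd, debar_eq_wd]; exact wd_sub hf hg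

lemma debar_eq_conj_de (hL : IsCFM 2 D L) {q : Pt 2} (hq : q ∈ D) (l : Fin 2) :
    debar L l q = (starRingEnd ℂ) (de L l q) := by
  have hA := fderiv_L_conj hL hq (0, Pi.single l 1)
  have hB := fderiv_L_conj hL hq (0, Pi.single l I)
  rw [de, debar, map_mul, map_sub, map_mul, hA, hB, Complex.conj_I]
  have : (starRingEnd ℂ) (1/2 : ℂ) = 1/2 := by rw [map_div₀, map_one, map_ofNat]
  rw [this]
  ring

/-- Case B: vanishing fibre Hessian on a neighbourhood. -/
lemma mainB (hL : IsCFM 2 D L) {U : Set (Pt 2)} (hU : IsOpen U) (hUD : U ⊆ D)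
    (hz : ∀ x ∈ U, ∀ k s : Fin 2, de (de L s) k x = 0)
    {p : Pt 2} (hp : p ∈ U) (i h : Fin 2) : debar (Gs L i) h p = 0 := by
  have s1 : ∀ x ∈ U, ∀ l h' : Fin 2, debar (debar L l) h' x = 0 := by
    intro x hx l h'
    have hcon : ∀ y ∈ D, debar L l y = (starRingEnd ℂ) (de L l y) :=
      fun y hy => debar_eq_conj_de hL hy l
    rw [debar_congr_on hL.openD (hUD hx) hcon h',
      debar_conj (((smL hL).wde l).dAt (hUD hx)),
      show de (de L l) h' x = 0 from hz x hx h' l]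
    exact map_zero _
  have s2 : ∀ x ∈ U, ∀ s l k' : Fin 2, de (gm L s l) k' x = 0 := by
    intro x hx s l k'
    have hcon : ∀ y ∈ D, gm L s l y = debar (de L s) l y :=
      fun y hy => de_debar_comm ((smL hL) y hy)
    rw [de_congr_on hL.openD (hUD hx) hcon k',
      show de (debar (de L s) l) k' x = debar (de (de L s) k') l x from
        de_debar_comm (((smL hL).wde s) x (hUD hx))]
    exact debar_zero_on hU hx (fun y hy => hz y hy k' s) l
  have s3 : ∀ x ∈ U, ∀ s l h' : Fin 2, debar (gm L s l) h' x = 0 := by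
    intro x hx s l h'
    have : debar (gm L s l) h' x = de (debar (debar L l) h') s x :=
      (de_debar_comm (((smL hL).wdebar l) x (hUD hx))).symm
    rw [this]
    exact de_zero_on hU hx (fun y hy => s1 y hy l h') s
  have s4 : ∀ x ∈ U, ∀ j m k' h' : Fin 2, debar (dz (gm L j m) k') h' x = 0 := by
    intro x hx j m k' h'
    rw [debar_dz_comm ((sm_gm hL j m) x (hUD hx))]
    exact dz_zero_on hU hx (fun y hy => s3 y hy j m h') k'
  have s5 : ∀ x ∈ U, ∀ h' : Fin 2, debar (fun y => (gmat L y).det) h' x = 0 := by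
    intro x hx h'
    have hdet : (fun y : Pt 2 => (gmat L y).det)
        = fun y => gm L 0 0 y * gm L 1 1 y - gm L 0 1 y * gm L 1 0 y :=
      funext (fun y => det_expand y)
    rw [hdet, debar_sub' (((sm_gm hL 0 0).mul (sm_gm hL 1 1)).dAt (hUD hx))
        (((sm_gm hL 0 1).mul (sm_gm hL 1 0)).dAt (hUD hx)),
      debar_mul ((sm_gm hL 0 0).dAt (hUD hx)) ((sm_gm hL 1 1).dAt (hUD hx)),
      debar_mul ((sm_gm hL 0 1).dAt (hUD hx)) ((sm_gm hL 1 0).dAt (hUD hx)),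
      s3 x hx 0 0 h', s3 x hx 1 1 h', s3 x hx 0 1 h', s3 x hx 1 0 h']
    ring
  have s6 : ∀ x ∈ U, ∀ l' i' h' : Fin 2, debar (gi L l' i') h' x = 0 := by
    intro x hx l' i' h'
    have hid : ∀ y ∈ D, (gmat L y).det * gi L l' i' y = (gmat L y).adjugate l' i' := by
      intro y hy
      rw [gi_formula, ← mul_assoc, mul_inv_cancel₀ (det_ne hL hy), one_mul]
    have h1 : debar (fun y => (gmat L y).det * gi L l' i' y) h' x
        = debar (fun y => (gmat L y).adjugate l' i') h' x :=
      debar_congr_on hL.openD (hUD hx) hid h'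
    have h2 : debar (fun y => (gmat L y).det * gi L l' i' y) h' x
        = debar (fun y => (gmat L y).det) h' x * gi L l' i' x
          + (gmat L x).det * debar (gi L l' i') h' x :=
      debar_mul ((sm_det hL).dAt (hUD hx)) ((sm_gi hL l' i').dAt (hUD hx))
    have h3 : debar (fun y => (gmat L y).adjugate l' i') h' x = 0 := by
      fin_cases l' <;> fin_cases i'
      · show debar (fun y : Pt 2 => (gmat L y).adjugate 0 0) h' x = 0
        have e : (fun y : Pt 2 => (gmat L y).adjugate 0 0) = gm L 1 1 := by
          funext y; rw [Matrix.adjugate_fin_two]; rfl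
        rw [e]; exact s3 x hx 1 1 h'
      · show debar (fun y : Pt 2 => (gmat L y).adjugate 0 1) h' x = 0
        have e : (fun y : Pt 2 => (gmat L y).adjugate 0 1) = fun y => - gm L 0 1 y := by
          funext y; rw [Matrix.adjugate_fin_two]; rfl
        rw [e, debar_neg' ((sm_gm hL 0 1).dAt (hUD hx)), s3 x hx 0 1 h', neg_zero]
      · show debar (fun y : Pt 2 => (gmat L y).adjugate 1 0) h' x = 0
        have e : (fun y : Pt 2 => (gmat L y).adjugate 1 0) = fun y => - gm L 1 0 y := by
          funext y; rw [Matrix.adjugate_fin_two]; rfl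
        rw [e, debar_neg' ((sm_gm hL 1 0).dAt (hUD hx)), s3 x hx 1 0 h', neg_zero]
      · show debar (fun y : Pt 2 => (gmat L y).adjugate 1 1) h' x = 0
        have e : (fun y : Pt 2 => (gmat L y).adjugate 1 1) = gm L 0 0 := by
          funext y; rw [Matrix.adjugate_fin_two]; rfl
        rw [e]; exact s3 x hx 0 0 h'
    rw [h2, s5 x hx h', h3] at h1
    have h4 : (gmat L x).det * debar (gi L l' i') h' x = 0 := by linear_combination h1
    exact (mul_eq_zero.mp h4).resolve_left (det_ne hL (hUD hx))
  have s7 : ∀ x ∈ U, ∀ i' k' h' : Fin 2, debar (Nc L i' k') h' x = 0 := by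
    intro x hx i' k' h'
    have hNc : Nc L i' k' = fun y : Pt 2 => ∑ m, ∑ l, gi L m i' y * dz (gm L l m) k' y * y.2 l := rfl
    have hdiff1 : ∀ m l : Fin 2,
        DifferentiableAt ℝ (fun y : Pt 2 => gi L m i' y * dz (gm L l m) k' y * y.2 l) x :=
      fun m l => (((sm_gi hL m i').mul ((sm_gm hL l m).wdz k')).dAt (hUD hx)).mul (diffAt_eta l)
    have hdiff2 : ∀ m : Fin 2,
        DifferentiableAt ℝ (fun y : Pt 2 => ∑ l, gi L m i' y * dz (gm L l m) k' y * y.2 l) x :=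
      fun m => DifferentiableAt.fun_sum (fun l _ => hdiff1 m l)
    rw [hNc, debar_sum hdiff2]
    apply Finset.sum_eq_zero
    intro m _
    rw [debar_sum (hdiff1 m)]
    apply Finset.sum_eq_zero
    intro l _
    rw [debar_mul (((sm_gi hL m i').mul ((sm_gm hL l m).wdz k')).dAt (hUD hx)) (diffAt_eta l),
      debar_mul ((sm_gi hL m i').dAt (hUD hx)) (((sm_gm hL l m).wdz k').dAt (hUD hx)),
      s6 x hx m i' h', s4 x hx l m k' h', debar_eta]
    ring
  have hGs : Gs L i = fun y : Pt 2 => (1/2:ℂ) * ∑ j, Nc L i j y * y.2 j := rfl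
  have hdiff : ∀ j : Fin 2, DifferentiableAt ℝ (fun y : Pt 2 => Nc L i j y * y.2 j) p :=
    fun j => ((sm_Nc hL i j).dAt (hUD hp)).mul (diffAt_eta j)
  rw [hGs, debar_cmul _ (DifferentiableAt.fun_sum (fun j _ => hdiff j)), debar_sum hdiff]
  have : ∀ j : Fin 2, debar (fun y : Pt 2 => Nc L i j y * y.2 j) h p = 0 := by
    intro j
    rw [debar_mul ((sm_Nc hL i j).dAt (hUD hp)) (diffAt_eta j), s7 p hp i j h, debar_eta]
    ring
  rw [Finset.sum_congr rfl (fun j _ => this j)]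
  simp

/-- Kähler implies the spray coefficients are holomorphic in the fibre. -/
theorem statement6' (hL : IsCFM 2 D L) (hK : IsKahler L D) :
    ∀ p ∈ D, ∀ i h : Fin 2, debar (Gs L i) h p = 0 := by
  intro p hp i h
  classical
  set A : Set (Pt 2) :=
    {x | x ∈ D ∧ ∃ k : Fin 2, de (de L 0) k x ≠ 0 ∨ de (de L 1) k x ≠ 0} with hA
  by_cases hcl : p ∈ closure A
  · have hcont : ContinuousAt (fun x => debar (Gs L i) h x) p :=
      (((sm_Gs hL i).wdebar h) p hp).continuousAt
    obtain ⟨u, hu, hulim⟩ := mem_closure_iff_seq_limit.mp hcl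
    have hz : ∀ n, debar (Gs L i) h (u n) = 0 := by
      intro n
      obtain ⟨hD', k, hk⟩ := hu n
      exact mainA hL hK hD' k hk i h
    have h1 : Filter.Tendsto (fun n => debar (Gs L i) h (u n)) Filter.atTop
        (nhds (debar (Gs L i) h p)) := hcont.tendsto.comp hulim
    rw [funext hz] at h1
    exact tendsto_nhds_unique h1 tendsto_const_nhds
  · have hUopen : IsOpen (D ∩ (closure A)ᶜ) := hL.openD.inter isClosed_closure.isOpen_compl
    have hUD : D ∩ (closure A)ᶜ ⊆ D := Set.inter_subset_left
    have hUz : ∀ x ∈ D ∩ (closure A)ᶜ, ∀ k s : Fin 2, de (de L s) k x = 0 := by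
      intro x hx k s
      by_contra hne
      apply hx.2
      apply subset_closure
      refine ⟨hx.1, k, ?_⟩
      fin_cases s
      · exact Or.inl hne
      · exact Or.inr hne
    exact mainB hL hUopen hUD hUz ⟨hp, hcl⟩ i h

end Ident
end Main


/-- Kähler implies the spray coefficients are holomorphic in `η`. -/
theorem statement6 (D : Set (Pt 2)) (L : Pt 2 → ℂ) (hL : IsCFM 2 D L)
    (hK : IsKahler L D) :
    ∀ p ∈ D, ∀ i h : Fin 2, debar (Gs L i) h p = 0 := by
  exact statement6' hL hK

end CFinsler
end
end
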